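/- arXiv:2004.08823 — 9 statements merged into one kernel-verified Lean document; each statement's English description precedes it below -/
import Mathlib

section
/- Let (g, [·,·]) be a Lie superalgebra and α, β : g → g two even algebra homomorphisms with α∘β = β∘α. Define a new bracket [x,y]_{α,β} = [α(x), β(y)]. Then (g, [·,·]_{α,β}, α, β) is a BiHom-Lie superalgebra. -/
/-- A BiHom-Lie superalgebra structure on a ℤ₂-graded vector space, given by a grading
`G`, an even bilinear bracket `br` and two even commuting multiplicative endomorphisms. -/
structure IsBiHomLieSuper (𝕜 : Type*) [Field 𝕜] {V : Type*} [AddCommGroup V] [Module 𝕜 V]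
    (G : ZMod 2 → Submodule 𝕜 V) (br : V → V → V) (α β : V →ₗ[𝕜] V) : Prop where
  sup_top : G 0 ⊔ G 1 = ⊤
  inf_bot : G 0 ⊓ G 1 = ⊥
  add₁ : ∀ x x' y : V, br (x + x') y = br x y + br x' y
  smul₁ : ∀ (c : 𝕜) (x y : V), br (c • x) y = c • br x y
  add₂ : ∀ x y y' : V, br x (y + y') = br x y + br x y'
  smul₂ : ∀ (c : 𝕜) (x y : V), br x (c • y) = c • br x y
  α_even : ∀ i, ∀ x ∈ G i, α x ∈ G i
  β_even : ∀ i, ∀ x ∈ G i, β x ∈ G i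
  br_grade : ∀ i j, ∀ x ∈ G i, ∀ y ∈ G j, br x y ∈ G (i + j)
  comm : ∀ x, α (β x) = β (α x)
  mult_α : ∀ x y, α (br x y) = br (α x) (α y)
  mult_β : ∀ x y, β (br x y) = br (β x) (β y)
  skew : ∀ (i j : ZMod 2), ∀ x ∈ G i, ∀ y ∈ G j,
    br (β x) (α y) = -((-1 : 𝕜) ^ (i.val * j.val)) • br (β y) (α x)
  jacobi : ∀ (i j k : ZMod 2), ∀ x ∈ G i, ∀ y ∈ G j, ∀ z ∈ G k,
    (-1 : 𝕜) ^ (i.val * k.val) • br (β (β x)) (br (β y) (α z)) +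
    (-1 : 𝕜) ^ (j.val * i.val) • br (β (β y)) (br (β z) (α x)) +
    (-1 : 𝕜) ^ (k.val * j.val) • br (β (β z)) (br (β x) (α y)) = 0

namespace IsBiHomLieSuper

variable {𝕜 V : Type*} [Field 𝕜] [AddCommGroup V] [Module 𝕜 V]
  {G : ZMod 2 → Submodule 𝕜 V} {br : V → V → V} {α β : V →ₗ[𝕜] V}

/-- Yau twist. Pushing `α'`, `β'` through brackets and moving `α`, `β` outward reduces each
axiom to the old one; the BiHom-Jacobi identity becomes the old one at `β' (β' (α' x))`,
`β' (β' (α' y))`, `β' (β' (α' z))`. -/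
theorem twist (hL : IsBiHomLieSuper 𝕜 G br α β) (α' β' : V →ₗ[𝕜] V)
    (hα'e : ∀ i, ∀ x ∈ G i, α' x ∈ G i) (hβ'e : ∀ i, ∀ x ∈ G i, β' x ∈ G i)
    (hα'm : ∀ x y, α' (br x y) = br (α' x) (α' y))
    (hβ'm : ∀ x y, β' (br x y) = br (β' x) (β' y))
    (hα'β' : ∀ x, α' (β' x) = β' (α' x))
    (hα'α : ∀ x, α' (α x) = α (α' x)) (hα'β : ∀ x, α' (β x) = β (α' x))
    (hβ'α : ∀ x, β' (α x) = α (β' x)) (hβ'β : ∀ x, β' (β x) = β (β' x)) :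
    IsBiHomLieSuper 𝕜 G (fun x y => br (α' x) (β' y)) (α ∘ₗ α') (β ∘ₗ β') := by
  have hαβ := hL.comm
  refine ⟨hL.sup_top, hL.inf_bot, ?_, ?_, ?_, ?_, ?_, ?_, ?_, ?_, ?_, ?_, ?_, ?_⟩
  · intro x x' y
    rw [map_add, hL.add₁]
  · intro c x y
    rw [map_smul, hL.smul₁]
  · intro x y y'
    rw [map_add, hL.add₂]
  · intro c x y
    rw [map_smul, hL.smul₂]
  · intro i x hx
    exact hL.α_even i _ (hα'e i x hx)
  · intro i x hx
    exact hL.β_even i _ (hβ'e i x hx)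
  · intro i j x hx y hy
    exact hL.br_grade i j _ (hα'e i x hx) _ (hβ'e j y hy)
  · intro x
    simp only [LinearMap.comp_apply, hα'β', hα'β, hβ'α, hαβ]
  · intro x y
    simp only [LinearMap.comp_apply, hα'm, hL.mult_α, hα'β', hα'α, hβ'α]
  · intro x y
    simp only [LinearMap.comp_apply, hβ'm, hL.mult_β, hα'β', hα'β, hβ'β]
  · intro i j x hx y hy
    simp only [LinearMap.comp_apply, hα'β', hα'β, hβ'α]
    exact hL.skew i j _ (hβ'e i _ (hα'e i x hx)) _ (hβ'e j _ (hα'e j y hy))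
  · intro i j k x hx y hy z hz
    have hX : ∀ l, ∀ w ∈ G l, β' (β' (α' w)) ∈ G l := fun l w hw =>
      hβ'e l _ (hβ'e l _ (hα'e l w hw))
    simp only [LinearMap.comp_apply, hβ'm, hα'β', hα'β, hβ'α, hβ'β]
    exact hL.jacobi i j k _ (hX i x hx) _ (hX j y hy) _ (hX k z hz)

end IsBiHomLieSuper

/-- Theorem (induced BiHom-Lie superalgebra): if `(g,[·,·])` is a Lie superalgebra
(i.e. a BiHom-Lie superalgebra with `α = β = id`) and `α, β` are even commuting algebra
homomorphisms, then `[x,y]_{α,β} := [α x, β y]` makes `(g, [·,·]_{α,β}, α, β)` a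
BiHom-Lie superalgebra. -/
theorem statement0 {𝕜 V : Type*} [Field 𝕜] [AddCommGroup V] [Module 𝕜 V]
    (G : ZMod 2 → Submodule 𝕜 V) (br : V → V → V)
    (hLie : IsBiHomLieSuper 𝕜 G br (LinearMap.id : V →ₗ[𝕜] V) LinearMap.id)
    (α β : V →ₗ[𝕜] V)
    (hαe : ∀ i, ∀ x ∈ G i, α x ∈ G i) (hβe : ∀ i, ∀ x ∈ G i, β x ∈ G i)
    (hαm : ∀ x y, α (br x y) = br (α x) (α y))
    (hβm : ∀ x y, β (br x y) = br (β x) (β y))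
    (hcomm : ∀ x, α (β x) = β (α x)) :
    IsBiHomLieSuper 𝕜 G (fun x y => br (α x) (β y)) α β :=
  hLie.twist α β hαe hβe hαm hβm hcomm (fun _ => rfl) (fun _ => rfl) (fun _ => rfl)
    (fun _ => rfl)
end

section
/- Let (g, [·,·,·]) be a 3-Lie superalgebra and α, β : g → g two even algebra homomorphisms with α∘β = β∘α. Define [x,y,z]_{α,β} = [α(x), α(y), β(z)]. Then (g, [·,·,·]_{α,β}, α, β) is a 3-BiHom-Lie superalgebra. -/
/-! Since `α` and `β` are multiplicative and commute, they can be pushed through the bracket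
and past each other; then each twisted skew-symmetry or Jacobi identity becomes the untwisted
one evaluated at the images of its arguments under `β ∘ α`, resp. `β ∘ β ∘ α`. As `α` and `β`
are even, these images have the same degrees, so the signs match. -/

structure Is3BiHomLieSuper (𝕜 : Type*) [Field 𝕜] {V : Type*} [AddCommGroup V] [Module 𝕜 V]
    (G : ZMod 2 → Submodule 𝕜 V) (br : V → V → V → V) (α β : V →ₗ[𝕜] V) : Prop where
  sup_top : G 0 ⊔ G 1 = ⊤
  inf_bot : G 0 ⊓ G 1 = ⊥
  add₁ : ∀ x x' y z : V, br (x + x') y z = br x y z + br x' y z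
  smul₁ : ∀ (c : 𝕜) (x y z : V), br (c • x) y z = c • br x y z
  add₂ : ∀ x y y' z : V, br x (y + y') z = br x y z + br x y' z
  smul₂ : ∀ (c : 𝕜) (x y z : V), br x (c • y) z = c • br x y z
  add₃ : ∀ x y z z' : V, br x y (z + z') = br x y z + br x y z'
  smul₃ : ∀ (c : 𝕜) (x y z : V), br x y (c • z) = c • br x y z
  α_even : ∀ i, ∀ x ∈ G i, α x ∈ G i
  β_even : ∀ i, ∀ x ∈ G i, β x ∈ G i
  br_grade : ∀ i j k, ∀ x ∈ G i, ∀ y ∈ G j, ∀ z ∈ G k, br x y z ∈ G (i + j + k)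
  comm : ∀ x, α (β x) = β (α x)
  mult_α : ∀ x y z, α (br x y z) = br (α x) (α y) (α z)
  mult_β : ∀ x y z, β (br x y z) = br (β x) (β y) (β z)
  skew₁ : ∀ (i j : ZMod 2), ∀ x ∈ G i, ∀ y ∈ G j, ∀ z : V,
    br (β x) (β y) (α z) = -((-1 : 𝕜) ^ (i.val * j.val)) • br (β y) (β x) (α z)
  skew₂ : ∀ (j k : ZMod 2), ∀ y ∈ G j, ∀ z ∈ G k, ∀ x : V,
    br (β x) (β y) (α z) = -((-1 : 𝕜) ^ (j.val * k.val)) • br (β x) (β z) (α y)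
  jacobi : ∀ (ix iy iz iu iv : ZMod 2), ∀ x ∈ G ix, ∀ y ∈ G iy, ∀ z ∈ G iz, ∀ u ∈ G iu, ∀ v ∈ G iv,
    br (β (β x)) (β (β y)) (br (β z) (β u) (α v)) =
      (-1 : 𝕜) ^ ((iu.val + iv.val) * (ix.val + iy.val + iz.val)) •
        br (β (β u)) (β (β v)) (br (β x) (β y) (α z)) -
      (-1 : 𝕜) ^ ((iz.val + iv.val) * (ix.val + iy.val) + iu.val * iv.val) •
        br (β (β z)) (β (β v)) (br (β x) (β y) (α u)) +
      (-1 : 𝕜) ^ ((iz.val + iu.val) * (ix.val + iy.val)) •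
        br (β (β z)) (β (β u)) (br (β x) (β y) (α v))

namespace Is3BiHomLieSuper

variable {𝕜 V : Type*} [Field 𝕜] [AddCommGroup V] [Module 𝕜 V]
  {G : ZMod 2 → Submodule 𝕜 V} {br : V → V → V → V}

theorem skew₁_of_id (h : Is3BiHomLieSuper 𝕜 G br LinearMap.id LinearMap.id)
    {i j : ZMod 2} {x y : V} (hx : x ∈ G i) (hy : y ∈ G j) (z : V) :
    br x y z = -((-1 : 𝕜) ^ (i.val * j.val)) • br y x z :=
  h.skew₁ i j x hx y hy z

theorem skew₂_of_id (h : Is3BiHomLieSuper 𝕜 G br LinearMap.id LinearMap.id)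
    {j k : ZMod 2} {y z : V} (hy : y ∈ G j) (hz : z ∈ G k) (x : V) :
    br x y z = -((-1 : 𝕜) ^ (j.val * k.val)) • br x z y :=
  h.skew₂ j k y hy z hz x

theorem jacobi_of_id (h : Is3BiHomLieSuper 𝕜 G br LinearMap.id LinearMap.id)
    {ix iy iz iu iv : ZMod 2} {x y z u v : V} (hx : x ∈ G ix) (hy : y ∈ G iy)
    (hz : z ∈ G iz) (hu : u ∈ G iu) (hv : v ∈ G iv) :
    br x y (br z u v) =
      (-1 : 𝕜) ^ ((iu.val + iv.val) * (ix.val + iy.val + iz.val)) • br u v (br x y z) -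
      (-1 : 𝕜) ^ ((iz.val + iv.val) * (ix.val + iy.val) + iu.val * iv.val) •
        br z v (br x y u) +
      (-1 : 𝕜) ^ ((iz.val + iu.val) * (ix.val + iy.val)) • br z u (br x y v) :=
  h.jacobi ix iy iz iu iv x hx y hy z hz u hu v hv

end Is3BiHomLieSuper

theorem map_twist_of_commute {𝕜 V : Type*} [Field 𝕜] [AddCommGroup V] [Module 𝕜 V]
    {br : V → V → V → V} {f α β : V →ₗ[𝕜] V}
    (hf : ∀ x y z, f (br x y z) = br (f x) (f y) (f z))
    (hα : ∀ x, f (α x) = α (f x)) (hβ : ∀ x, f (β x) = β (f x)) (x y z : V) :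
    f (br (α x) (α y) (β z)) = br (α (f x)) (α (f y)) (β (f z)) := by
  rw [hf, hα, hα, hβ]

/-- If `(g,[·,·,·])` is a 3-Lie superalgebra (a 3-BiHom-Lie superalgebra with
`α = β = id`) and `α, β` are even commuting algebra homomorphisms, then
`[x,y,z]_{α,β} := [α x, α y, β z]` yields a 3-BiHom-Lie superalgebra `(g,[·,·,·]_{α,β},α,β)`. -/
theorem statement1 {𝕜 V : Type*} [Field 𝕜] [AddCommGroup V] [Module 𝕜 V]
    (G : ZMod 2 → Submodule 𝕜 V) (br : V → V → V → V)
    (hLie : Is3BiHomLieSuper 𝕜 G br (LinearMap.id : V →ₗ[𝕜] V) LinearMap.id)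
    (α β : V →ₗ[𝕜] V)
    (hαe : ∀ i, ∀ x ∈ G i, α x ∈ G i) (hβe : ∀ i, ∀ x ∈ G i, β x ∈ G i)
    (hαm : ∀ x y z, α (br x y z) = br (α x) (α y) (α z))
    (hβm : ∀ x y z, β (br x y z) = br (β x) (β y) (β z))
    (hcomm : ∀ x, α (β x) = β (α x)) :
    Is3BiHomLieSuper 𝕜 G (fun x y z => br (α x) (α y) (β z)) α β := by
  have hβα : ∀ i, ∀ x ∈ G i, β (α x) ∈ G i := fun i x hx => hβe i _ (hαe i x hx)
  have hββα : ∀ i, ∀ x ∈ G i, β (β (α x)) ∈ G i := fun i x hx => hβe i _ (hβα i x hx)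
  refine
    { sup_top := hLie.sup_top
      inf_bot := hLie.inf_bot
      add₁ := fun x x' y z => by simp only [map_add, hLie.add₁]
      smul₁ := fun c x y z => by simp only [map_smul, hLie.smul₁]
      add₂ := fun x y y' z => by simp only [map_add, hLie.add₂]
      smul₂ := fun c x y z => by simp only [map_smul, hLie.smul₂]
      add₃ := fun x y z z' => by simp only [map_add, hLie.add₃]
      smul₃ := fun c x y z => by simp only [map_smul, hLie.smul₃]
      α_even := hαe
      β_even := hβe
      br_grade := fun i j k x hx y hy z hz =>
        hLie.br_grade i j k _ (hαe i x hx) _ (hαe j y hy) _ (hβe k z hz)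
      comm := hcomm
      mult_α := map_twist_of_commute hαm (fun _ => rfl) hcomm
      mult_β := map_twist_of_commute hβm (fun x => (hcomm x).symm) (fun _ => rfl)
      skew₁ := fun i j x hx y hy z => by
        simpa only [hcomm] using hLie.skew₁_of_id (hβα i x hx) (hβα j y hy) (β (α z))
      skew₂ := fun j k y hy z hz x => by
        simpa only [hcomm] using hLie.skew₂_of_id (hβα j y hy) (hβα k z hz) (β (α x))
      jacobi := fun ix iy iz iu iv x hx y hy z hz u hu v hv => by
        simp only [hβm, hcomm]
        exact hLie.jacobi_of_id (hββα ix x hx) (hββα iy y hy) (hββα iz z hz)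
          (hββα iu u hu) (hββα iv v hv) }
end

section
/- Let (g, [·,·,·], α, β) be a 3-BiHom-Lie superalgebra, and α', β' : g → g two even commuting algebra homomorphisms such that any two of the maps α, β, α', β' commute. Then (g, [·,·,·]_{α',β'}, α∘α', β∘β') is a 3-BiHom-Lie superalgebra, where [x,y,z]_{α',β'} = [α'(x), α'(y), β'(z)]. -/
/-! The twisted bracket evaluated on the new structure maps is the old bracket evaluated on the
old structure maps, after moving the twists inside: with `γ = α' ∘ β'`,
`[ββ'x, ββ'y, αα'z]_{α',β'} = [β(γx), β(γy), α(γz)]`, and both sides of the new Jacobi identity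
are those of the old one applied to `α' ∘ β' ∘ β'`. Skew-symmetry and the Jacobi identity are
then inherited because the twists are even. -/

section TwistedBracket

variable {V : Type*}

def twistedBracket (br : V → V → V → V) (f g : V → V) : V → V → V → V :=
  fun x y z => br (f x) (f y) (g z)

variable {br : V → V → V → V} {α β f g h h' : V → V}

theorem map_bracket_comp (hh : ∀ x y z, h (br x y z) = br (h x) (h y) (h z))
    (hh' : ∀ x y z, h' (br x y z) = br (h' x) (h' y) (h' z)) (x y z : V) :
    (h ∘ h') (br x y z) = br ((h ∘ h') x) ((h ∘ h') y) ((h ∘ h') z) := by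
  simp only [Function.comp_apply, hh', hh]

theorem map_twistedBracket (hh : ∀ x y z, h (br x y z) = br (h x) (h y) (h z))
    (hf : Function.Commute h f) (hg : Function.Commute h g) (x y z : V) :
    h (twistedBracket br f g x y z) = twistedBracket br f g (h x) (h y) (h z) := by
  simp only [twistedBracket, hh, hf.eq, hg.eq]

theorem twistedBracket_skewArgs (hβf : Function.Commute β f) (hαg : Function.Commute α g)
    (hfg : Function.Commute f g) (x y z : V) :
    twistedBracket br f g (β (g x)) (β (g y)) (α (f z)) =
      br (β (f (g x))) (β (f (g y))) (α (f (g z))) := by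
  simp only [twistedBracket, ← hβf.eq, ← hαg.eq, ← hfg.eq]

theorem twistedBracket_jacobiArgs
    (hg : ∀ x y z, g (br x y z) = br (g x) (g y) (g z)) (hβf : Function.Commute β f)
    (hβg : Function.Commute β g) (hαg : Function.Commute α g) (hfg : Function.Commute f g)
    (x y z u v : V) :
    twistedBracket br f g (β (g (β (g x)))) (β (g (β (g y))))
        (twistedBracket br f g (β (g z)) (β (g u)) (α (f v))) =
      br (β (β (f (g (g x))))) (β (β (f (g (g y)))))
        (br (β (f (g (g z)))) (β (f (g (g u)))) (α (f (g (g v))))) := by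
  simp only [twistedBracket, hg, ← hβf.eq, ← hβg.eq, ← hαg.eq, ← hfg.eq]

end TwistedBracket

/-- Let `(g,[·,·,·],α,β)` be a 3-BiHom-Lie superalgebra and `α', β'` two even commuting
algebra homomorphisms such that any two of `α, β, α', β'` commute.  Then
`(g, [·,·,·]∘(α'⊗α'⊗β'), α∘α', β∘β')` is a 3-BiHom-Lie superalgebra. -/
theorem statement2 {𝕜 V : Type*} [Field 𝕜] [AddCommGroup V] [Module 𝕜 V]
    (G : ZMod 2 → Submodule 𝕜 V) (br : V → V → V → V) (α β α' β' : V →ₗ[𝕜] V)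
    (halg : Is3BiHomLieSuper 𝕜 G br α β)
    (hα'e : ∀ i, ∀ x ∈ G i, α' x ∈ G i) (hβ'e : ∀ i, ∀ x ∈ G i, β' x ∈ G i)
    (hα'm : ∀ x y z, α' (br x y z) = br (α' x) (α' y) (α' z))
    (hβ'm : ∀ x y z, β' (br x y z) = br (β' x) (β' y) (β' z))
    (hα'β' : ∀ x, α' (β' x) = β' (α' x))
    (hαα' : ∀ x, α (α' x) = α' (α x))
    (hαβ' : ∀ x, α (β' x) = β' (α x))
    (hβα' : ∀ x, β (α' x) = α' (β x))
    (hββ' : ∀ x, β (β' x) = β' (β x)) :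
    Is3BiHomLieSuper 𝕜 G (fun x y z => br (α' x) (α' y) (β' z)) (α ∘ₗ α') (β ∘ₗ β') := by
  have hγ : ∀ i, ∀ x ∈ G i, α' (β' x) ∈ G i := fun i x hx => hα'e i _ (hβ'e i x hx)
  have hδ : ∀ i, ∀ x ∈ G i, α' (β' (β' x)) ∈ G i := fun i x hx => hγ i _ (hβ'e i x hx)
  have hαα'm := map_bracket_comp halg.mult_α hα'm
  have hββ'm := map_bracket_comp halg.mult_β hβ'm
  show Is3BiHomLieSuper 𝕜 G (twistedBracket br α' β') (α ∘ₗ α') (β ∘ₗ β')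
  refine
    { sup_top := halg.sup_top
      inf_bot := halg.inf_bot
      add₁ := fun x x' y z => by simp only [twistedBracket, map_add, halg.add₁]
      smul₁ := fun c x y z => by simp only [twistedBracket, map_smul, halg.smul₁]
      add₂ := fun x y y' z => by simp only [twistedBracket, map_add, halg.add₂]
      smul₂ := fun c x y z => by simp only [twistedBracket, map_smul, halg.smul₂]
      add₃ := fun x y z z' => by simp only [twistedBracket, map_add, halg.add₃]
      smul₃ := fun c x y z => by simp only [twistedBracket, map_smul, halg.smul₃]
      α_even := fun i x hx => halg.α_even i _ (hα'e i x hx)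
      β_even := fun i x hx => halg.β_even i _ (hβ'e i x hx)
      br_grade := fun i j k x hx y hy z hz =>
        halg.br_grade i j k _ (hα'e i x hx) _ (hα'e j y hy) _ (hβ'e k z hz)
      comm := (Function.Commute.comp_left (.comp_right halg.comm hαβ')
        (.comp_right (.symm hβα') hα'β') : Function.Commute (α ∘ α') (β ∘ β'))
      mult_α := map_twistedBracket (h := α ∘ α') hαα'm (.comp_left hαα' (.refl _))
        (.comp_left hαβ' hα'β')
      mult_β := map_twistedBracket (h := β ∘ β') hββ'm (.comp_left hβα' (.symm hα'β'))
        (.comp_left hββ' (.refl _))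
      skew₁ := fun i j x hx y hy z => ?_
      skew₂ := fun j k y hy z hz x => ?_
      jacobi := fun ix iy iz iu iv x hx y hy z hz u hu v hv => ?_ }
  · simpa only [LinearMap.comp_apply, twistedBracket_skewArgs hβα' hαβ' hα'β'] using
      halg.skew₁ i j _ (hγ i x hx) _ (hγ j y hy) (α' (β' z))
  · simpa only [LinearMap.comp_apply, twistedBracket_skewArgs hβα' hαβ' hα'β'] using
      halg.skew₂ j k _ (hγ j y hy) _ (hγ k z hz) (α' (β' x))
  · simpa only [LinearMap.comp_apply,
      twistedBracket_jacobiArgs hβ'm hβα' hββ' hαβ' hα'β'] using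
      halg.jacobi ix iy iz iu iv _ (hδ ix x hx) _ (hδ iy y hy) _ (hδ iz z hz) _ (hδ iu u hu) _
        (hδ iv v hv)
end

section
/- Let (g, [·,·,·], α, β) be a 3-BiHom-Lie superalgebra and k ≥ 0 an integer. Then (g, [·,·,·]_k, α^{k+1}, β^{k+1}) is a 3-BiHom-Lie superalgebra, where [x,y,z]_k = [α^k(x), α^k(y), β^k(z)]. -/
section TrilinearBracket

variable {𝕜 V : Type*} [Field 𝕜] [AddCommGroup V] [Module 𝕜 V] {br : V → V → V → V}

def twistBr (br : V → V → V → V) (α β : Module.End 𝕜 V) (k : ℕ) : V → V → V → V :=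
  fun x y z => br ((α ^ k) x) ((α ^ k) y) ((β ^ k) z)

theorem pow_apply_br {f : Module.End 𝕜 V} (hf : ∀ x y z, f (br x y z) = br (f x) (f y) (f z))
    (n : ℕ) (x y z : V) : (f ^ n) (br x y z) = br ((f ^ n) x) ((f ^ n) y) ((f ^ n) z) := by
  induction n generalizing x y z with
  | zero => rfl
  | succ n ih => simp only [pow_succ, Module.End.mul_apply, hf, ih]

theorem apply_twistBr {α β f : Module.End 𝕜 V}
    (hf : ∀ x y z, f (br x y z) = br (f x) (f y) (f z)) (hα : Commute f α) (hβ : Commute f β)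
    (k : ℕ) (x y z : V) : f (twistBr br α β k x y z) = twistBr br α β k (f x) (f y) (f z) := by
  simp only [twistBr, hf, ← Module.End.mul_apply, (hα.pow_right k).eq, (hβ.pow_right k).eq]

end TrilinearBracket

namespace Is3BiHomLieSuper

variable {𝕜 V : Type*} [Field 𝕜] [AddCommGroup V] [Module 𝕜 V]
  {G : ZMod 2 → Submodule 𝕜 V} {br : V → V → V → V} {α β : Module.End 𝕜 V}
  (h : Is3BiHomLieSuper 𝕜 G br α β)
include h

theorem α_pow_apply_mem (n : ℕ) {i : ZMod 2} {x : V} (hx : x ∈ G i) : (α ^ n) x ∈ G i :=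
  Module.End.pow_apply_mem_of_forall_mem n (h.α_even i) x hx

theorem β_pow_apply_mem (n : ℕ) {i : ZMod 2} {x : V} (hx : x ∈ G i) : (β ^ n) x ∈ G i :=
  Module.End.pow_apply_mem_of_forall_mem n (h.β_even i) x hx

theorem commute : Commute α β :=
  LinearMap.ext h.comm

theorem pow_apply_pow_apply_comm (m n : ℕ) (x : V) :
    (α ^ m) ((β ^ n) x) = (β ^ n) ((α ^ m) x) :=
  LinearMap.congr_fun (h.commute.pow_pow m n).eq x

theorem pow_apply_apply_comm (k : ℕ) (x : V) : (α ^ k) (β x) = β ((α ^ k) x) := by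
  simpa using h.pow_apply_pow_apply_comm k 1 x

theorem apply_pow_apply_comm (k : ℕ) (x : V) : (β ^ k) (α x) = α ((β ^ k) x) := by
  simpa using (h.pow_apply_pow_apply_comm 1 k x).symm

theorem twistBr_pow_succ_apply (k : ℕ) (x y z : V) :
    twistBr br α β k ((β ^ (k + 1)) x) ((β ^ (k + 1)) y) ((α ^ (k + 1)) z) =
      br (β ((α ^ k) ((β ^ k) x))) (β ((α ^ k) ((β ^ k) y))) (α ((α ^ k) ((β ^ k) z))) := by
  simp only [twistBr, pow_succ', Module.End.mul_apply, h.pow_apply_apply_comm,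
    h.apply_pow_apply_comm, h.pow_apply_pow_apply_comm]

theorem twistBr_jacobi_term (k : ℕ) (x y z u v : V) :
    twistBr br α β k ((β ^ (k + 1)) ((β ^ (k + 1)) x)) ((β ^ (k + 1)) ((β ^ (k + 1)) y))
        (twistBr br α β k ((β ^ (k + 1)) z) ((β ^ (k + 1)) u) ((α ^ (k + 1)) v)) =
      br (β (β ((α ^ k) ((β ^ k) ((β ^ k) x))))) (β (β ((α ^ k) ((β ^ k) ((β ^ k) y)))))
        (br (β ((α ^ k) ((β ^ k) ((β ^ k) z)))) (β ((α ^ k) ((β ^ k) ((β ^ k) u))))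
          (α ((α ^ k) ((β ^ k) ((β ^ k) v))))) := by
  have hβ (x : V) : (β ^ k) (β x) = β ((β ^ k) x) :=
    LinearMap.congr_fun (Commute.self_pow β k).symm.eq x
  rw [h.twistBr_pow_succ_apply]
  simp only [twistBr, pow_apply_br h.mult_β, pow_succ', Module.End.mul_apply, hβ,
    h.pow_apply_apply_comm, h.apply_pow_apply_comm, h.pow_apply_pow_apply_comm]

end Is3BiHomLieSuper

/-- For a 3-BiHom-Lie superalgebra `(g,[·,·,·],α,β)` and `k ≥ 0`,
`(g, [·,·,·]_k := [·,·,·]∘(α^k⊗α^k⊗β^k), α^{k+1}, β^{k+1})` is a 3-BiHom-Lie superalgebra. -/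
theorem statement3 {𝕜 V : Type*} [Field 𝕜] [AddCommGroup V] [Module 𝕜 V]
    (G : ZMod 2 → Submodule 𝕜 V) (br : V → V → V → V) (α β : Module.End 𝕜 V)
    (halg : Is3BiHomLieSuper 𝕜 G br α β) (k : ℕ) :
    Is3BiHomLieSuper 𝕜 G (fun x y z => br ((α ^ k) x) ((α ^ k) y) ((β ^ k) z))
      (α ^ (k + 1)) (β ^ (k + 1)) := by
  show Is3BiHomLieSuper 𝕜 G (twistBr br α β k) (α ^ (k + 1)) (β ^ (k + 1))
  have hγ {i : ZMod 2} {x : V} (hx : x ∈ G i) : (α ^ k) ((β ^ k) x) ∈ G i :=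
    halg.α_pow_apply_mem k (halg.β_pow_apply_mem k hx)
  have hδ {i : ZMod 2} {x : V} (hx : x ∈ G i) : (α ^ k) ((β ^ k) ((β ^ k) x)) ∈ G i :=
    hγ (halg.β_pow_apply_mem k hx)
  exact
    { sup_top := halg.sup_top
      inf_bot := halg.inf_bot
      add₁ x x' y z := by simp only [twistBr, map_add, halg.add₁]
      smul₁ c x y z := by simp only [twistBr, map_smul, halg.smul₁]
      add₂ x y y' z := by simp only [twistBr, map_add, halg.add₂]
      smul₂ c x y z := by simp only [twistBr, map_smul, halg.smul₂]
      add₃ x y z z' := by simp only [twistBr, map_add, halg.add₃]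
      smul₃ c x y z := by simp only [twistBr, map_smul, halg.smul₃]
      α_even i _ := halg.α_pow_apply_mem (k + 1)
      β_even i _ := halg.β_pow_apply_mem (k + 1)
      br_grade i j l x hx y hy z hz := halg.br_grade i j l _ (halg.α_pow_apply_mem k hx) _
        (halg.α_pow_apply_mem k hy) _ (halg.β_pow_apply_mem k hz)
      comm := halg.pow_apply_pow_apply_comm (k + 1) (k + 1)
      mult_α := apply_twistBr (pow_apply_br halg.mult_α (k + 1))
        (Commute.self_pow α (k + 1)).symm (halg.commute.pow_left (k + 1)) k
      mult_β := apply_twistBr (pow_apply_br halg.mult_β (k + 1))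
        (halg.commute.pow_right (k + 1)).symm (Commute.self_pow β (k + 1)).symm k
      skew₁ i j x hx y hy z := by
        simp only [halg.twistBr_pow_succ_apply]
        exact halg.skew₁ i j _ (hγ hx) _ (hγ hy) _
      skew₂ j l y hy z hz x := by
        simp only [halg.twistBr_pow_succ_apply]
        exact halg.skew₂ j l _ (hγ hy) _ (hγ hz) _
      jacobi ix iy iz iu iv x hx y hy z hz u hu v hv := by
        simp only [halg.twistBr_jacobi_term]
        exact halg.jacobi ix iy iz iu iv _ (hδ hx) _ (hδ hy) _ (hδ hz) _ (hδ hu) _ (hδ hv) }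
end

section
/- Let (g, [·,·,·], α, β) be a regular 3-BiHom-Lie superalgebra and u₁, u₂ ∈ g homogeneous elements with α(u₁) = β(u₁) = u₁ and α(u₂) = β(u₂) = u₂. Define D_{r,s}(u₁,u₂)(w) = [u₁, u₂, α^r β^s(w)]. Then D_{r,s}(u₁,u₂) is an (α^r β^{s+1})-derivation of g. -/
/-! Because `u₁, u₂` are fixed by `α` and `β`, the operator `D = [u₁, u₂, ·]` commutes with `α`
and `β`, and `D_{r,s} = D ∘ α^r β^s`. Composing a `θ`-derivation with an endomorphism `E` of the
bracket that preserves the grading and commutes with `α, β` gives a `θE`-derivation, so it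
suffices that `D` is a `β`-derivation. For homogeneous `a, b, c`, regularity lets us write
`a = β a'`, `b = β b'`, `c = α c'` with `a', b', c'` homogeneous of the same degrees; the
BiHom-Jacobi identity for `u₁, u₂, a', b', c'`, after the two skew-symmetries move `D a` and
`D b` into place, is the Leibniz rule, the signs agreeing mod 2. -/

open Function

section Grading

variable {𝕜 V : Type*} [Field 𝕜] [AddCommGroup V] [Module 𝕜 V]

def ternaryEndSubmonoid (br : V → V → V → V) : Submonoid (Module.End 𝕜 V) where
  carrier := {f | ∀ x y z, f (br x y z) = br (f x) (f y) (f z)}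
  one_mem' _ _ _ := rfl
  mul_mem' {f g} hf hg x y z := by
    change f (g _) = br (f (g x)) (f (g y)) (f (g z))
    rw [hg, hf]

def gradedEndSubmonoid (G : ZMod 2 → Submodule 𝕜 V) : Submonoid (Module.End 𝕜 V) where
  carrier := {f | ∀ i, ∀ x ∈ G i, f x ∈ G i}
  one_mem' _ _ hx := hx
  mul_mem' hf hg i _ hx := hf i _ (hg i _ hx)

lemma mem_of_apply_mem {G : ZMod 2 → Submodule 𝕜 V} (hG : ∀ i, IsCompl (G i) (G (i + 1)))
    {f : Module.End 𝕜 V} (hf : Injective f) (hfG : f ∈ gradedEndSubmonoid G) {i : ZMod 2}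
    {x : V} (hx : f x ∈ G i) : x ∈ G i := by
  have hx' : x ∈ G i ⊔ G (i + 1) := (hG i).sup_eq_top ▸ Submodule.mem_top
  obtain ⟨a, ha, b, hb, rfl⟩ := Submodule.mem_sup.1 hx'
  have hfb : f b ∈ G i := by simpa using sub_mem hx (hfG i a ha)
  have hb0 : f b = 0 := Submodule.disjoint_def.1 (hG i).disjoint _ hfb (hfG _ b hb)
  rwa [(map_eq_zero_iff f hf).1 hb0, add_zero]

end Grading

lemma neg_one_pow_congr_of_natCast_eq {R : Type*} [Ring R] {m n : ℕ}
    (h : (m : ZMod 2) = n) : (-1 : R) ^ m = (-1) ^ n := by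
  rw [neg_one_pow_eq_pow_mod_two, (ZMod.natCast_eq_natCast_iff' m n 2).1 h,
    ← neg_one_pow_eq_pow_mod_two]

section Derivation

variable {𝕜 V : Type*} [Field 𝕜] [AddCommGroup V] [Module 𝕜 V]
  {G : ZMod 2 → Submodule 𝕜 V} {br : V → V → V → V}

lemma apply_br_of_apply_eq {f : Module.End 𝕜 V} (hf : f ∈ ternaryEndSubmonoid br) {u₁ u₂ : V}
    (hu₁ : f u₁ = u₁) (hu₂ : f u₂ = u₂) (w : V) : f (br u₁ u₂ w) = br u₁ u₂ (f w) := by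
  rw [hf, hu₁, hu₂]

/-- An `(α^s β^r)`-derivation of parity `p mod 2`, with `θ = α^s β^r`. -/
def IsTwistedDerivation (G : ZMod 2 → Submodule 𝕜 V) (br : V → V → V → V)
    (α β θ : Module.End 𝕜 V) (p : ℕ) (D : V → V) : Prop :=
  (∀ w, D (α w) = α (D w)) ∧ (∀ w, D (β w) = β (D w)) ∧
  ∀ (jx jy : ZMod 2), ∀ x ∈ G jx, ∀ y ∈ G jy, ∀ z : V,
    D (br x y z) = br (D x) (θ y) (θ z) + (-1 : 𝕜) ^ (jx.val * p) • br (θ x) (D y) (θ z) +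
      (-1 : 𝕜) ^ ((jx.val + jy.val) * p) • br (θ x) (θ y) (D z)

lemma IsTwistedDerivation.comp {α β θ E : Module.End 𝕜 V} {p : ℕ} {D : V → V}
    (hD : IsTwistedDerivation G br α β θ p D) (hE : E ∈ ternaryEndSubmonoid br)
    (hEG : E ∈ gradedEndSubmonoid G) (hEα : Commute E α) (hEβ : Commute E β) :
    IsTwistedDerivation G br α β (θ * E) p (D ∘ E) := by
  obtain ⟨hDα, hDβ, hDbr⟩ := hD
  refine ⟨fun w => ?_, fun w => ?_, fun jx jy x hx y hy z => ?_⟩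
  · rw [comp_apply, comp_apply, ← hDα, ← Module.End.mul_apply, hEα.eq, Module.End.mul_apply]
  · rw [comp_apply, comp_apply, ← hDβ, ← Module.End.mul_apply, hEβ.eq, Module.End.mul_apply]
  · simp only [comp_apply, Module.End.mul_apply]
    rw [hE]
    exact hDbr jx jy _ (hEG jx x hx) _ (hEG jy y hy) _

end Derivation

namespace Is3BiHomLieSuper

variable {𝕜 V : Type*} [Field 𝕜] [AddCommGroup V] [Module 𝕜 V]
  {G : ZMod 2 → Submodule 𝕜 V} {br : V → V → V → V} {α β : Module.End 𝕜 V}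

lemma isCompl (h : Is3BiHomLieSuper 𝕜 G br α β) (i : ZMod 2) : IsCompl (G i) (G (i + 1)) := by
  have h01 : IsCompl (G 0) (G 1) := .of_eq h.inf_bot h.sup_top
  fin_cases i
  · exact h01
  · exact h01.symm

lemma commute_s7 (h : Is3BiHomLieSuper 𝕜 G br α β) : Commute α β := LinearMap.ext h.comm

lemma α_mem_ternaryEndSubmonoid (h : Is3BiHomLieSuper 𝕜 G br α β) :
    α ∈ ternaryEndSubmonoid br := h.mult_α

lemma β_mem_ternaryEndSubmonoid (h : Is3BiHomLieSuper 𝕜 G br α β) :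
    β ∈ ternaryEndSubmonoid br := h.mult_β

lemma α_mem_gradedEndSubmonoid (h : Is3BiHomLieSuper 𝕜 G br α β) :
    α ∈ gradedEndSubmonoid G := h.α_even

lemma β_mem_gradedEndSubmonoid (h : Is3BiHomLieSuper 𝕜 G br α β) :
    β ∈ gradedEndSubmonoid G := h.β_even

lemma leibniz_of_mem (h : Is3BiHomLieSuper 𝕜 G br α β) (hα : Bijective α)
    (hβ : Bijective β) {i₁ i₂ : ZMod 2} {u₁ u₂ : V} (hu₁ : u₁ ∈ G i₁) (hu₂ : u₂ ∈ G i₂)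
    (hαu₁ : α u₁ = u₁) (hβu₁ : β u₁ = u₁) (hαu₂ : α u₂ = u₂) (hβu₂ : β u₂ = u₂)
    {ja jb jc : ZMod 2} {a b c : V} (ha : a ∈ G ja) (hb : b ∈ G jb) (hc : c ∈ G jc) :
    br u₁ u₂ (br a b c) = br (br u₁ u₂ a) (β b) (β c) +
      (-1 : 𝕜) ^ (ja.val * (i₁.val + i₂.val)) • br (β a) (br u₁ u₂ b) (β c) +
      (-1 : 𝕜) ^ ((ja.val + jb.val) * (i₁.val + i₂.val)) • br (β a) (β b) (br u₁ u₂ c) := by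
  obtain ⟨a, rfl⟩ := hβ.2 a
  obtain ⟨b, rfl⟩ := hβ.2 b
  obtain ⟨c, rfl⟩ := hα.2 c
  replace ha := mem_of_apply_mem h.isCompl hβ.1 h.β_mem_gradedEndSubmonoid ha
  replace hb := mem_of_apply_mem h.isCompl hβ.1 h.β_mem_gradedEndSubmonoid hb
  replace hc := mem_of_apply_mem h.isCompl hα.1 h.α_mem_gradedEndSubmonoid hc
  have hDa : br u₁ u₂ a ∈ G (i₁ + i₂ + ja) := h.br_grade _ _ _ _ hu₁ _ hu₂ _ ha
  have hDb : br u₁ u₂ b ∈ G (i₁ + i₂ + jb) := h.br_grade _ _ _ _ hu₁ _ hu₂ _ hb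
  have hβb : β b ∈ G jb := h.β_even _ _ hb
  have hβc : β c ∈ G jc := h.β_even _ _ hc
  have hαD := apply_br_of_apply_eq h.α_mem_ternaryEndSubmonoid hαu₁ hαu₂
  have hβD := apply_br_of_apply_eq h.β_mem_ternaryEndSubmonoid hβu₁ hβu₂
  have hJ := h.jacobi i₁ i₂ ja jb jc u₁ hu₁ u₂ hu₂ a ha b hb c hc
  simp only [hβu₁, hβu₂, ← hαD a, ← hαD b] at hJ
  have hskew_a : br (β (β b)) (β (β c)) (α (br u₁ u₂ a)) =
      (-1 : 𝕜) ^ (jc.val * (i₁ + i₂ + ja).val + jb.val * (i₁ + i₂ + ja).val) •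
        br (β (br u₁ u₂ a)) (β (β b)) (β (α c)) := by
    rw [h.skew₂ _ _ _ hβc _ hDa, h.skew₁ _ _ _ hβb _ hDa, h.comm, smul_smul, neg_mul_neg, pow_add]
  have hskew_b : br (β (β a)) (β (β c)) (α (br u₁ u₂ b)) =
      -(-1 : 𝕜) ^ (jc.val * (i₁ + i₂ + jb).val) • br (β (β a)) (β (br u₁ u₂ b)) (β (α c)) := by
    rw [h.skew₂ _ _ _ hβc _ hDb, h.comm]
  rw [← hβD a, ← hβD b, hJ, hskew_a, hskew_b, smul_smul, smul_smul, sub_eq_add_neg, ← neg_smul]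
  congr 2
  · rw [← pow_add, neg_one_pow_congr_of_natCast_eq (n := 0), pow_zero, one_smul]
    push_cast [ZMod.natCast_zmod_val]
    grind
  · rw [mul_neg, neg_neg, ← pow_add, neg_one_pow_congr_of_natCast_eq]
    push_cast [ZMod.natCast_zmod_val]
    grind

lemma isTwistedDerivation_br (h : Is3BiHomLieSuper 𝕜 G br α β) (hα : Bijective α)
    (hβ : Bijective β) {i₁ i₂ : ZMod 2} {u₁ u₂ : V} (hu₁ : u₁ ∈ G i₁) (hu₂ : u₂ ∈ G i₂)
    (hαu₁ : α u₁ = u₁) (hβu₁ : β u₁ = u₁) (hαu₂ : α u₂ = u₂) (hβu₂ : β u₂ = u₂) :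
    IsTwistedDerivation G br α β β (i₁.val + i₂.val) (br u₁ u₂) := by
  refine ⟨fun w => (apply_br_of_apply_eq h.α_mem_ternaryEndSubmonoid hαu₁ hαu₂ w).symm,
    fun w => (apply_br_of_apply_eq h.β_mem_ternaryEndSubmonoid hβu₁ hβu₂ w).symm,
    fun jx jy x hx y hy z => ?_⟩
  have hz : z ∈ G 0 ⊔ G (0 + 1) := (h.isCompl 0).sup_eq_top ▸ Submodule.mem_top
  obtain ⟨z₀, hz₀, z₁, hz₁, rfl⟩ := Submodule.mem_sup.1 hz
  simp only [h.add₃, map_add, smul_add,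
    h.leibniz_of_mem hα hβ hu₁ hu₂ hαu₁ hβu₁ hαu₂ hβu₂ hx hy hz₀,
    h.leibniz_of_mem hα hβ hu₁ hu₂ hαu₁ hβu₁ hαu₂ hβu₂ hx hy hz₁]
  abel

end Is3BiHomLieSuper

/-- For a regular 3-BiHom-Lie superalgebra and homogeneous `u₁, u₂` fixed by `α` and `β`,
the map `D_{r,s}(u₁,u₂) : w ↦ [u₁, u₂, α^r β^s(w)]` is an `(α^r β^{s+1})`-derivation:
it commutes with `α` and `β` and satisfies the twisted super-Leibniz rule with twist
`α^r β^{s+1}` and parity `|u₁| + |u₂|`. -/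
theorem statement7 {𝕜 V : Type*} [Field 𝕜] [AddCommGroup V] [Module 𝕜 V]
    (G : ZMod 2 → Submodule 𝕜 V) (br : V → V → V → V) (α β : Module.End 𝕜 V)
    (halg : Is3BiHomLieSuper 𝕜 G br α β)
    (hαbij : Function.Bijective α) (hβbij : Function.Bijective β)
    (r s : ℕ) (i₁ i₂ : ZMod 2) (u₁ u₂ : V) (hu₁ : u₁ ∈ G i₁) (hu₂ : u₂ ∈ G i₂)
    (hαu₁ : α u₁ = u₁) (hβu₁ : β u₁ = u₁) (hαu₂ : α u₂ = u₂) (hβu₂ : β u₂ = u₂) :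
    (∀ w, br u₁ u₂ ((α ^ r * β ^ s) (α w)) = α (br u₁ u₂ ((α ^ r * β ^ s) w))) ∧
    (∀ w, br u₁ u₂ ((α ^ r * β ^ s) (β w)) = β (br u₁ u₂ ((α ^ r * β ^ s) w))) ∧
    (∀ (jx jy : ZMod 2), ∀ x ∈ G jx, ∀ y ∈ G jy, ∀ z : V,
      br u₁ u₂ ((α ^ r * β ^ s) (br x y z)) =
        br (br u₁ u₂ ((α ^ r * β ^ s) x)) ((α ^ r * β ^ (s + 1)) y) ((α ^ r * β ^ (s + 1)) z) +
        (-1 : 𝕜) ^ (jx.val * (i₁.val + i₂.val)) •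
          br ((α ^ r * β ^ (s + 1)) x) (br u₁ u₂ ((α ^ r * β ^ s) y)) ((α ^ r * β ^ (s + 1)) z) +
        (-1 : 𝕜) ^ ((jx.val + jy.val) * (i₁.val + i₂.val)) •
          br ((α ^ r * β ^ (s + 1)) x) ((α ^ r * β ^ (s + 1)) y)
            (br u₁ u₂ ((α ^ r * β ^ s) z))) := by
  have hαβ := halg.commute_s7
  have hE : α ^ r * β ^ s ∈ ternaryEndSubmonoid br :=
    mul_mem (pow_mem halg.α_mem_ternaryEndSubmonoid r) (pow_mem halg.β_mem_ternaryEndSubmonoid s)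
  have hEG : α ^ r * β ^ s ∈ gradedEndSubmonoid G :=
    mul_mem (pow_mem halg.α_mem_gradedEndSubmonoid r) (pow_mem halg.β_mem_gradedEndSubmonoid s)
  have hEα : Commute (α ^ r * β ^ s) α :=
    ((Commute.refl α).pow_left r).mul_left (hαβ.symm.pow_left s)
  have hEβ : Commute (α ^ r * β ^ s) β :=
    (hαβ.pow_left r).mul_left ((Commute.refl β).pow_left s)
  have htwist : β * (α ^ r * β ^ s) = α ^ r * β ^ (s + 1) := by
    rw [pow_succ', ← mul_assoc, ← mul_assoc, (hαβ.symm.pow_right r).eq]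
  have hD := (halg.isTwistedDerivation_br hαbij hβbij hu₁ hu₂ hαu₁ hβu₁ hαu₂ hβu₂).comp
    hE hEG hEα hEβ
  rwa [htwist] at hD
end

section
/- For a regular 3-BiHom-Lie superalgebra g, the space Der(g) = ⊕_{s,r≥0} Der_{α^s β^r}(g) is closed under the supercommutator: if D ∈ Der_{α^s β^r}(g) and D' ∈ Der_{α^{s'} β^{r'}}(g), then [D, D'] = D∘D' - (-1)^{|D||D'|} D'∘D belongs to Der_{α^{s+s'} β^{r+r'}}(g). -/
/-- `D` is an `(α^s β^r)`-derivation of parity `d` of the 3-BiHom-Lie superalgebra. -/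
def IsDer (𝕜 : Type*) [Field 𝕜] {V : Type*} [AddCommGroup V] [Module 𝕜 V]
    (G : ZMod 2 → Submodule 𝕜 V) (br : V → V → V → V) (α β : Module.End 𝕜 V)
    (s r : ℕ) (d : ZMod 2) (D : Module.End 𝕜 V) : Prop :=
  (∀ x, D (α x) = α (D x)) ∧ (∀ x, D (β x) = β (D x)) ∧
  (∀ i, ∀ x ∈ G i, D x ∈ G (i + d)) ∧
  (∀ (jx jy : ZMod 2), ∀ x ∈ G jx, ∀ y ∈ G jy, ∀ z : V,
    D (br x y z) =
      br (D x) ((α ^ s * β ^ r) y) ((α ^ s * β ^ r) z) +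
      (-1 : 𝕜) ^ (jx.val * d.val) • br ((α ^ s * β ^ r) x) (D y) ((α ^ s * β ^ r) z) +
      (-1 : 𝕜) ^ ((jx.val + jy.val) * d.val) •
        br ((α ^ s * β ^ r) x) ((α ^ s * β ^ r) y) (D z))

/-!
Expand `D (D' [x, y, z])` and `D' (D [x, y, z])` by the twisted Leibniz rule. Since `D`, `D'`
commute with `α` and `β`, every twist `α ^ s * β ^ r` can be moved past the other derivation, and
the twists compose to `α ^ (s + s') * β ^ (r + r')`. The terms in which `D` and `D'` hit different
arguments of the bracket then occur in `D D'` and in `(-1) ^ (|D| |D'|) D' D` with the same sign and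
cancel; the terms in which both hit the same argument assemble into the supercommutator.
-/

theorem neg_one_pow_val_add_mul {R : Type*} [Ring R] (a b c : ZMod 2) :
    (-1 : R) ^ ((a + b).val * c.val) = (-1) ^ (a.val * c.val) * (-1) ^ (b.val * c.val) := by
  rw [← pow_add, ← add_mul, ZMod.val_add, neg_one_pow_eq_pow_mod_two, Nat.mod_mul_mod,
    ← neg_one_pow_eq_pow_mod_two]

theorem neg_one_pow_val_mul_add {R : Type*} [Ring R] (a b c : ZMod 2) :
    (-1 : R) ^ (a.val * (b + c).val) = (-1) ^ (a.val * b.val) * (-1) ^ (a.val * c.val) := by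
  simp only [mul_comm a.val, neg_one_pow_val_add_mul]

theorem Commute.pow_mul_pow_mul_pow_mul_pow {M : Type*} [Monoid M] {a b : M} (hab : Commute a b)
    (s r s' r' : ℕ) : a ^ s * b ^ r * (a ^ s' * b ^ r') = a ^ (s + s') * b ^ (r + r') := by
  rw [(hab.pow_pow s' r).symm.mul_mul_mul_comm, pow_add, pow_add]

section

variable {𝕜 V : Type*} [Field 𝕜] [AddCommGroup V] [Module 𝕜 V]
  {G : ZMod 2 → Submodule 𝕜 V} {br : V → V → V → V} {α β : Module.End 𝕜 V}

namespace Is3BiHomLieSuper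

theorem br_sub₁ (halg : Is3BiHomLieSuper 𝕜 G br α β) (x x' y z : V) :
    br (x - x') y z = br x y z - br x' y z :=
  (AddMonoidHom.mk' (br · y z) (halg.add₁ · · y z)).map_sub x x'

theorem br_sub₂ (halg : Is3BiHomLieSuper 𝕜 G br α β) (x y y' z : V) :
    br x (y - y') z = br x y z - br x y' z :=
  (AddMonoidHom.mk' (br x · z) (halg.add₂ x · · z)).map_sub y y'

theorem br_sub₃ (halg : Is3BiHomLieSuper 𝕜 G br α β) (x y z z' : V) :
    br x y (z - z') = br x y z - br x y z' :=
  (AddMonoidHom.mk' (br x y ·) (halg.add₃ x y)).map_sub z z'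

theorem commute_α_β (halg : Is3BiHomLieSuper 𝕜 G br α β) : Commute α β :=
  LinearMap.ext halg.comm

theorem pow_mul_pow_mem (halg : Is3BiHomLieSuper 𝕜 G br α β) {i : ZMod 2} {x : V} (hx : x ∈ G i)
    (s r : ℕ) :
    (α ^ s * β ^ r) x ∈ G i :=
  Module.End.pow_apply_mem_of_forall_mem s (halg.α_even i) _
    (Module.End.pow_apply_mem_of_forall_mem r (halg.β_even i) x hx)

end Is3BiHomLieSuper

namespace IsDer

variable {s r : ℕ} {d : ZMod 2} {D : Module.End 𝕜 V}

theorem commute_α (hD : IsDer 𝕜 G br α β s r d D) : Commute D α :=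
  LinearMap.ext hD.1

theorem commute_β (hD : IsDer 𝕜 G br α β s r d D) : Commute D β :=
  LinearMap.ext hD.2.1

theorem commute_pow_mul_pow (hD : IsDer 𝕜 G br α β s r d D) (n m : ℕ) :
    Commute D (α ^ n * β ^ m) :=
  (hD.commute_α.pow_right n).mul_right (hD.commute_β.pow_right m)

theorem mem_add (hD : IsDer 𝕜 G br α β s r d D) {i : ZMod 2} {x : V} (hx : x ∈ G i) :
    D x ∈ G (i + d) :=
  hD.2.2.1 i x hx

theorem apply_br (hD : IsDer 𝕜 G br α β s r d D) {jx jy : ZMod 2} {x y : V} (hx : x ∈ G jx)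
    (hy : y ∈ G jy) (z : V) :
    D (br x y z) =
      br (D x) ((α ^ s * β ^ r) y) ((α ^ s * β ^ r) z) +
      (-1 : 𝕜) ^ (jx.val * d.val) • br ((α ^ s * β ^ r) x) (D y) ((α ^ s * β ^ r) z) +
      (-1 : 𝕜) ^ ((jx.val + jy.val) * d.val) •
        br ((α ^ s * β ^ r) x) ((α ^ s * β ^ r) y) (D z) :=
  hD.2.2.2 jx jy x hx y hy z

variable {s' r' : ℕ} {d' : ZMod 2} {D' : Module.End 𝕜 V}

theorem supercommutator_apply_br (halg : Is3BiHomLieSuper 𝕜 G br α β)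
    (hD : IsDer 𝕜 G br α β s r d D) (hD' : IsDer 𝕜 G br α β s' r' d' D')
    {jx jy : ZMod 2} {x y : V} (hx : x ∈ G jx) (hy : y ∈ G jy) (z : V) :
    (D * D' - ((-1 : 𝕜) ^ (d.val * d'.val)) • (D' * D)) (br x y z) =
      br ((D * D' - ((-1 : 𝕜) ^ (d.val * d'.val)) • (D' * D)) x)
        ((α ^ (s + s') * β ^ (r + r')) y) ((α ^ (s + s') * β ^ (r + r')) z) +
      (-1 : 𝕜) ^ (jx.val * (d + d').val) • br ((α ^ (s + s') * β ^ (r + r')) x)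
        ((D * D' - ((-1 : 𝕜) ^ (d.val * d'.val)) • (D' * D)) y)
        ((α ^ (s + s') * β ^ (r + r')) z) +
      (-1 : 𝕜) ^ ((jx.val + jy.val) * (d + d').val) •
        br ((α ^ (s + s') * β ^ (r + r')) x) ((α ^ (s + s') * β ^ (r + r')) y)
        ((D * D' - ((-1 : 𝕜) ^ (d.val * d'.val)) • (D' * D)) z) := by
  have hAA' : ∀ v, (α ^ s * β ^ r) ((α ^ s' * β ^ r') v) = (α ^ (s + s') * β ^ (r + r')) v :=
    fun v => by rw [← Module.End.mul_apply, halg.commute_α_β.pow_mul_pow_mul_pow_mul_pow]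
  have hA'A : ∀ v, (α ^ s' * β ^ r') ((α ^ s * β ^ r) v) = (α ^ (s + s') * β ^ (r + r')) v :=
    fun v => by rw [← Module.End.mul_apply, halg.commute_α_β.pow_mul_pow_mul_pow_mul_pow,
      add_comm s, add_comm r]
  -- so that `pow_add` below splits only the exponents of signs
  set A'' := α ^ (s + s') * β ^ (r + r')
  have hDA' : ∀ v, D ((α ^ s' * β ^ r') v) = (α ^ s' * β ^ r') (D v) :=
    LinearMap.congr_fun (hD.commute_pow_mul_pow s' r')
  have hD'A : ∀ v, D' ((α ^ s * β ^ r) v) = (α ^ s * β ^ r) (D' v) :=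
    LinearMap.congr_fun (hD'.commute_pow_mul_pow s r)
  have hA'x := halg.pow_mul_pow_mem hx s' r'
  have hA'y := halg.pow_mul_pow_mem hy s' r'
  have hAx := halg.pow_mul_pow_mem hx s r
  have hAy := halg.pow_mul_pow_mem hy s r
  simp only [LinearMap.sub_apply, LinearMap.smul_apply, Module.End.mul_apply]
  rw [hD'.apply_br hx hy, hD.apply_br hx hy]
  simp only [map_add, map_smul]
  rw [hD.apply_br (hD'.mem_add hx) hA'y, hD.apply_br hA'x (hD'.mem_add hy), hD.apply_br hA'x hA'y,
    hD'.apply_br (hD.mem_add hx) hAy, hD'.apply_br hAx (hD.mem_add hy), hD'.apply_br hAx hAy]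
  simp only [halg.br_sub₁, halg.br_sub₂, halg.br_sub₃, halg.smul₁, halg.smul₂, halg.smul₃,
    hAA', hA'A, hDA', hD'A, add_mul, pow_add, neg_one_pow_val_add_mul, neg_one_pow_val_mul_add]
  -- the cross terms cancel only up to the factor `((-1) ^ (d.val * d'.val)) ^ 2 = 1`
  match_scalars <;> ring_nf <;> simp only [pow_mul', neg_one_sq, one_pow] <;> ring

end IsDer

end

theorem statement8_general {𝕜 V : Type*} [Field 𝕜] [AddCommGroup V] [Module 𝕜 V]
    (G : ZMod 2 → Submodule 𝕜 V) (br : V → V → V → V) (α β : Module.End 𝕜 V)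
    (halg : Is3BiHomLieSuper 𝕜 G br α β)
    (s r s' r' : ℕ) (d d' : ZMod 2) (D D' : Module.End 𝕜 V)
    (hD : IsDer 𝕜 G br α β s r d D) (hD' : IsDer 𝕜 G br α β s' r' d' D') :
    IsDer 𝕜 G br α β (s + s') (r + r') (d + d')
      (D * D' - ((-1 : 𝕜) ^ (d.val * d'.val)) • (D' * D)) := by
  have supercomm {f : Module.End 𝕜 V} (h : Commute D f) (h' : Commute D' f) :
      Commute (D * D' - ((-1 : 𝕜) ^ (d.val * d'.val)) • (D' * D)) f :=
    (h.mul_left h').sub_left ((h'.mul_left h).smul_left _)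
  refine ⟨LinearMap.congr_fun (supercomm hD.commute_α hD'.commute_α),
    LinearMap.congr_fun (supercomm hD.commute_β hD'.commute_β), fun i x hx => ?_,
    fun jx jy x hx y hy z => hD.supercommutator_apply_br halg hD' hx hy z⟩
  have hDD' : D (D' x) ∈ G (i + (d + d')) := by
    simpa only [add_right_comm, add_assoc] using hD.mem_add (hD'.mem_add hx)
  have hD'D : D' (D x) ∈ G (i + (d + d')) := by
    simpa only [add_assoc] using hD'.mem_add (hD.mem_add hx)
  exact sub_mem hDD' (Submodule.smul_mem _ _ hD'D)

/-- For a regular 3-BiHom-Lie superalgebra, the supercommutator of an `(α^s β^r)`-derivation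
of parity `d` and an `(α^{s'} β^{r'})`-derivation of parity `d'` is an
`(α^{s+s'} β^{r+r'})`-derivation of parity `d + d'`. -/
theorem statement8 {𝕜 V : Type*} [Field 𝕜] [AddCommGroup V] [Module 𝕜 V]
    (G : ZMod 2 → Submodule 𝕜 V) (br : V → V → V → V) (α β : Module.End 𝕜 V)
    (halg : Is3BiHomLieSuper 𝕜 G br α β)
    (hαbij : Function.Bijective α) (hβbij : Function.Bijective β)
    (s r s' r' : ℕ) (d d' : ZMod 2) (D D' : Module.End 𝕜 V)
    (hD : IsDer 𝕜 G br α β s r d D) (hD' : IsDer 𝕜 G br α β s' r' d' D') :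
    IsDer 𝕜 G br α β (s + s') (r + r') (d + d')
      (D * D' - ((-1 : 𝕜) ^ (d.val * d'.val)) • (D' * D)) :=
  statement8_general G br α β halg s r s' r' d d' D D' hD hD'
end

section
/- Let (g, [·,·,·], α, β) be a 3-BiHom-Lie superalgebra, (M, ρ, α_M, β_M) a representation with α, β_M surjective, and θ a 3-cocycle associated with ρ. Then g ⊕ M with bracket [u+x, v+y, w+z]_θ = [u,v,w] + θ(u,v,w) + ρ(u,v)(z) - (-1)^{|v||w|} ρ(u, α^{-1}β(w))(α_M β_M^{-1}(y)) + (-1)^{|u|(|v|+|w|)} ρ(v, α^{-1}β(w))(α_M β_M^{-1}(x)) and structure maps α+α_M, β+β_M is a 3-BiHom-Lie superalgebra (the T_θ-extension of g by M). -/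
structure IsRep3 (𝕜 : Type*) [Field 𝕜] {V M : Type*} [AddCommGroup V] [Module 𝕜 V]
    [AddCommGroup M] [Module 𝕜 M]
    (G : ZMod 2 → Submodule 𝕜 V) (br : V → V → V → V) (α β : V →ₗ[𝕜] V)
    (GM : ZMod 2 → Submodule 𝕜 M) (ρ : V → V → M →ₗ[𝕜] M) (αM βM : M →ₗ[𝕜] M) : Prop where
  supM : GM 0 ⊔ GM 1 = ⊤
  infM : GM 0 ⊓ GM 1 = ⊥
  commM : ∀ m, αM (βM m) = βM (αM m)
  ρadd₁ : ∀ x x' y : V, ρ (x + x') y = ρ x y + ρ x' y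
  ρsmul₁ : ∀ (c : 𝕜) (x y : V), ρ (c • x) y = c • ρ x y
  ρadd₂ : ∀ x y y' : V, ρ x (y + y') = ρ x y + ρ x y'
  ρsmul₂ : ∀ (c : 𝕜) (x y : V), ρ x (c • y) = c • ρ x y
  ρskew : ∀ (i j : ZMod 2), ∀ x ∈ G i, ∀ y ∈ G j, ρ x y = -((-1 : 𝕜) ^ (i.val * j.val)) • ρ y x
  ρeven : ∀ (i j k : ZMod 2), ∀ x ∈ G i, ∀ y ∈ G j, ∀ m ∈ GM k, ρ x y m ∈ GM (i + j + k)
  αM_even : ∀ k, ∀ m ∈ GM k, αM m ∈ GM k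
  βM_even : ∀ k, ∀ m ∈ GM k, βM m ∈ GM k
  rep₁ : ∀ u v, ρ (α u) (α v) ∘ₗ αM = αM ∘ₗ ρ u v
  rep₂ : ∀ u v, ρ (β u) (β v) ∘ₗ βM = βM ∘ₗ ρ u v
  rep₃ : ∀ (iu iv ix iy : ZMod 2), ∀ u ∈ G iu, ∀ v ∈ G iv, ∀ x ∈ G ix, ∀ y ∈ G iy,
    ρ (α (β u)) (α (β v)) ∘ₗ ρ x y =
      (-1 : 𝕜) ^ ((iu.val + iv.val) * (ix.val + iy.val)) • (ρ (β x) (β y) ∘ₗ ρ (α u) (α v)) +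
      ρ (br (β u) (β v) x) (β y) ∘ₗ βM +
      (-1 : 𝕜) ^ (ix.val * (iu.val + iv.val)) • (ρ (β x) (br (β u) (β v) y) ∘ₗ βM)
  rep₄ : ∀ (iu iv ix iy : ZMod 2), ∀ u ∈ G iu, ∀ v ∈ G iv, ∀ x ∈ G ix, ∀ y ∈ G iy,
    ρ (br (β u) (β v) x) (β y) ∘ₗ βM =
      (-1 : 𝕜) ^ (iu.val * (ix.val + iv.val)) • (ρ (α (β v)) (β x) ∘ₗ ρ (α u) y) +
      (-1 : 𝕜) ^ (ix.val * (iu.val + iv.val)) • (ρ (β x) (α (β u)) ∘ₗ ρ (α v) y) +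
      ρ (α (β u)) (α (β v)) ∘ₗ ρ x y

structure Is3Cocycle (𝕜 : Type*) [Field 𝕜] {V M : Type*} [AddCommGroup V] [Module 𝕜 V]
    [AddCommGroup M] [Module 𝕜 M]
    (G : ZMod 2 → Submodule 𝕜 V) (br : V → V → V → V) (α β : V →ₗ[𝕜] V)
    (GM : ZMod 2 → Submodule 𝕜 M) (ρ : V → V → M →ₗ[𝕜] M) (αM βM : M →ₗ[𝕜] M)
    (θ : V → V → V → M) : Prop where
  θadd₁ : ∀ x x' y z : V, θ (x + x') y z = θ x y z + θ x' y z
  θsmul₁ : ∀ (c : 𝕜) (x y z : V), θ (c • x) y z = c • θ x y z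
  θadd₂ : ∀ x y y' z : V, θ x (y + y') z = θ x y z + θ x y' z
  θsmul₂ : ∀ (c : 𝕜) (x y z : V), θ x (c • y) z = c • θ x y z
  θadd₃ : ∀ x y z z' : V, θ x y (z + z') = θ x y z + θ x y z'
  θsmul₃ : ∀ (c : 𝕜) (x y z : V), θ x y (c • z) = c • θ x y z
  θeven : ∀ (i j k : ZMod 2), ∀ x ∈ G i, ∀ y ∈ G j, ∀ z ∈ G k, θ x y z ∈ GM (i + j + k)
  equiv_α : ∀ x y z, αM (θ x y z) = θ (α x) (α y) (α z)
  equiv_β : ∀ x y z, βM (θ x y z) = θ (β x) (β y) (β z)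
  cskew₁ : ∀ (i j : ZMod 2), ∀ x ∈ G i, ∀ y ∈ G j, ∀ z : V,
    θ (β x) (β y) (α z) = -((-1 : 𝕜) ^ (i.val * j.val)) • θ (β y) (β x) (α z)
  cskew₂ : ∀ (j k : ZMod 2), ∀ y ∈ G j, ∀ z ∈ G k, ∀ x : V,
    θ (β x) (β y) (α z) = -((-1 : 𝕜) ^ (j.val * k.val)) • θ (β x) (β z) (α y)
  cocycle : ∀ (i1 i2 i3 i4 i5 : ZMod 2), ∀ x1 ∈ G i1, ∀ x2 ∈ G i2, ∀ x3 ∈ G i3,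
      ∀ x4 ∈ G i4, ∀ x5 ∈ G i5,
    θ (β (β x1)) (β (β x2)) (br (β x3) (β x4) (α x5)) +
      ρ (β (β x1)) (β (β x2)) (θ (β x3) (β x4) (α x5)) =
    (-1 : 𝕜) ^ ((i4.val + i5.val) * (i1.val + i2.val + i3.val)) •
      (θ (β (β x4)) (β (β x5)) (br (β x1) (β x2) (α x3)) +
        ρ (β (β x4)) (β (β x5)) (θ (β x1) (β x2) (α x3))) -
    (-1 : 𝕜) ^ ((i3.val + i5.val) * (i1.val + i2.val) + i4.val * i5.val) •
      (θ (β (β x3)) (β (β x5)) (br (β x1) (β x2) (α x4)) +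
        ρ (β (β x3)) (β (β x5)) (θ (β x1) (β x2) (α x4))) +
    (-1 : 𝕜) ^ ((i3.val + i4.val) * (i1.val + i2.val)) •
      (θ (β (β x3)) (β (β x4)) (br (β x1) (β x2) (α x5)) +
        ρ (β (β x3)) (β (β x4)) (θ (β x1) (β x2) (α x5)))

/-!
The grading of `g ⊕ M` is `Gᵢ × GMᵢ` and the bracket is additive, so every axiom need only be
checked on homogeneous elements, where the bracket is `(br, extBracketSnd …)`. Since
`G₀ ∩ G₁ = 0`, the inverses `α⁻¹` and `β_M⁻¹` preserve degrees. Multiplicativity and super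
skew-symmetry then follow componentwise from those of `br`, `θ` and `ρ`. In the Jacobi identity
the `g`-component is the Jacobi identity of `g`; the `M`-component is affine in the module parts
`m₁, …, m₅` of the five arguments: its constant part is the cocycle identity, its parts linear in
`m₃, m₄, m₅` are the representation axiom `rep₃`, and those linear in `m₁, m₂` are `rep₄`, each
evaluated at `u = α⁻¹ β x`, `v = α⁻¹ β y`.
-/

theorem ZMod.eq_zero_or_eq_one (i : ZMod 2) : i = 0 ∨ i = 1 := by
  revert i; decide

namespace Submodule

variable {R W : Type*} [Ring R] [AddCommGroup W] [Module R W] {G : ZMod 2 → Submodule R W}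

theorem induction_of_sup_eq_top (hG : G 0 ⊔ G 1 = ⊤) {motive : W → Prop}
    (mem : ∀ i, ∀ x ∈ G i, motive x) (add : ∀ x y, motive x → motive y → motive (x + y))
    (x : W) : motive x := by
  obtain ⟨a, ha, b, hb, rfl⟩ := mem_sup.mp (hG ▸ mem_top : x ∈ G 0 ⊔ G 1)
  exact add a b (mem 0 a ha) (mem 1 b hb)

theorem map_bracket_of_homogeneous (hG : G 0 ⊔ G 1 = ⊤) {br : W → W → W → W}
    (hadd₁ : ∀ p p' q r, br (p + p') q r = br p q r + br p' q r)
    (hadd₂ : ∀ p q q' r, br p (q + q') r = br p q r + br p q' r)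
    (hadd₃ : ∀ p q r r', br p q (r + r') = br p q r + br p q r')
    (f : W →ₗ[R] W)
    (h : ∀ i j k, ∀ p ∈ G i, ∀ q ∈ G j, ∀ r ∈ G k, f (br p q r) = br (f p) (f q) (f r))
    (p q r : W) : f (br p q r) = br (f p) (f q) (f r) := by
  induction p using induction_of_sup_eq_top hG generalizing q r with
  | add p p' hp hp' => rw [hadd₁, map_add, map_add, hadd₁, hp, hp']
  | mem i p hp =>
  induction q using induction_of_sup_eq_top hG generalizing r with
  | add q q' hq hq' => rw [hadd₂, map_add, map_add, hadd₂, hq, hq']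
  | mem j q hq =>
  induction r using induction_of_sup_eq_top hG with
  | add r r' hr hr' => rw [hadd₃, map_add, map_add, hadd₃, hr, hr']
  | mem k r hr => exact h i j k p hp q hq r hr

theorem mem_of_inverse (hsup : G 0 ⊔ G 1 = ⊤) (hinf : G 0 ⊓ G 1 = ⊥) {f g : W →ₗ[R] W}
    (hfg : ∀ x, f (g x) = x) (hgf : ∀ x, g (f x) = x) (hf : ∀ i, ∀ x ∈ G i, f x ∈ G i)
    {i : ZMod 2} {x : W} (hx : x ∈ G i) : g x ∈ G i := by
  obtain ⟨a, ha, b, hb, hab⟩ := mem_sup.mp (hsup ▸ mem_top : g x ∈ G 0 ⊔ G 1)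
  have hx' : f a + f b = x := by rw [← map_add, hab, hfg]
  have hzero : ∀ y, f y ∈ G 0 → f y ∈ G 1 → y = 0 := fun y h₀ h₁ => by
    have hfy : f y ∈ G 0 ⊓ G 1 := ⟨h₀, h₁⟩
    rw [hinf, mem_bot] at hfy
    rw [← hgf y, hfy, map_zero]
  rcases ZMod.eq_zero_or_eq_one i with rfl | rfl
  · have hfb : f b = x - f a := by rw [← hx']; abel
    rw [← hab, hzero b (hfb ▸ sub_mem hx (hf 0 a ha)) (hf 1 b hb), add_zero]
    exact ha
  · have hfa : f a = x - f b := by rw [← hx']; abel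
    rw [← hab, hzero a (hf 0 a ha) (hfa ▸ sub_mem hx (hf 1 b hb)), zero_add]
    exact hb

theorem prodMap_mem_prod {ι X : Type*} [AddCommGroup X] [Module R X] {P : ι → Submodule R W}
    {Q : ι → Submodule R X} {f : W →ₗ[R] W} {g : X →ₗ[R] X} (hf : ∀ i, ∀ x ∈ P i, f x ∈ P i)
    (hg : ∀ i, ∀ x ∈ Q i, g x ∈ Q i) {i : ι} {p : W × X} (hp : p ∈ (P i).prod (Q i)) :
    f.prodMap g p ∈ (P i).prod (Q i) :=
  ⟨hf i _ hp.1, hg i _ hp.2⟩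

end Submodule

section Extension

variable {𝕜 V M : Type*} [Field 𝕜] [AddCommGroup V] [Module 𝕜 V] [AddCommGroup M] [Module 𝕜 M]

/-- The `M`-component of `[u + x, v + y, w + z]_θ`, for `u, x` of degree `i`, `v, y` of degree `j`
and `w, z` of degree `k`. -/
def extBracketSnd (θ : V → V → V → M) (ρ : V → V → M →ₗ[𝕜] M) (β αi : V →ₗ[𝕜] V)
    (αM βMi : M →ₗ[𝕜] M) (i j k : ZMod 2) (u v w : V) (x y z : M) : M :=
  θ u v w + ρ u v z - (-1 : 𝕜) ^ (j.val * k.val) • ρ u (αi (β w)) (αM (βMi y)) +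
    (-1 : 𝕜) ^ (i.val * (j.val + k.val)) • ρ v (αi (β w)) (αM (βMi x))

def IsExtBracket (G : ZMod 2 → Submodule 𝕜 V) (GM : ZMod 2 → Submodule 𝕜 M)
    (br : V → V → V → V) (θ : V → V → V → M) (ρ : V → V → M →ₗ[𝕜] M) (β αi : V →ₗ[𝕜] V)
    (αM βMi : M →ₗ[𝕜] M) (Br : V × M → V × M → V × M → V × M) : Prop :=
  ∀ (i j k : ZMod 2) (p q r : V × M),
    p ∈ (G i).prod (GM i) → q ∈ (G j).prod (GM j) → r ∈ (G k).prod (GM k) →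
      Br p q r = (br p.1 q.1 r.1, extBracketSnd θ ρ β αi αM βMi i j k p.1 q.1 r.1 p.2 q.2 r.2)

variable {G : ZMod 2 → Submodule 𝕜 V} {br : V → V → V → V} {α β αi : V →ₗ[𝕜] V}
  {GM : ZMod 2 → Submodule 𝕜 M} {ρ : V → V → M →ₗ[𝕜] M} {αM βM βMi : M →ₗ[𝕜] M}
  {θ : V → V → V → M}

namespace Is3BiHomLieSuper

theorem αi_mem (halg : Is3BiHomLieSuper 𝕜 G br α β) (hαi₁ : ∀ x, α (αi x) = x)
    (hαi₂ : ∀ x, αi (α x) = x) {i : ZMod 2} {x : V} (hx : x ∈ G i) : αi x ∈ G i :=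
  Submodule.mem_of_inverse halg.sup_top halg.inf_bot hαi₁ hαi₂ halg.α_even hx

theorem αi_β_α (halg : Is3BiHomLieSuper 𝕜 G br α β) (hαi₂ : ∀ x, αi (α x) = x) (x : V) :
    αi (β (α x)) = β x := by
  rw [← halg.comm, hαi₂]

theorem α_β_αi (halg : Is3BiHomLieSuper 𝕜 G br α β) (hαi₁ : ∀ x, α (αi x) = x) (x : V) :
    α (β (αi x)) = β x := by
  rw [halg.comm, hαi₁]

theorem αi_β (halg : Is3BiHomLieSuper 𝕜 G br α β) (hαi₁ : ∀ x, α (αi x) = x)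
    (hαi₂ : ∀ x, αi (α x) = x) (x : V) : αi (β x) = β (αi x) := by
  rw [← halg.α_β_αi hαi₁, hαi₂]

theorem αi_β_br (halg : Is3BiHomLieSuper 𝕜 G br α β) (hαi₁ : ∀ x, α (αi x) = x)
    (hαi₂ : ∀ x, αi (α x) = x) (x y z : V) :
    αi (β (br (β x) (β y) (α z))) = br (β (αi (β x))) (β (αi (β y))) (β z) := by
  rw [halg.mult_β, ← halg.α_β_αi hαi₁ (β x), ← halg.α_β_αi hαi₁ (β y), ← halg.comm z,
    ← halg.mult_α, hαi₂]

end Is3BiHomLieSuper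

namespace IsRep3

theorem βMi_αM (hrep : IsRep3 𝕜 G br α β GM ρ αM βM) (hβMi₁ : ∀ m, βM (βMi m) = m)
    (hβMi₂ : ∀ m, βMi (βM m) = m) (m : M) : βMi (αM m) = αM (βMi m) := by
  rw [← hβMi₂ (αM (βMi m)), ← hrep.commM, hβMi₁]

theorem ρ_α_αM (hrep : IsRep3 𝕜 G br α β GM ρ αM βM) (u v : V) (m : M) :
    ρ (α u) (α v) (αM m) = αM (ρ u v m) :=
  LinearMap.congr_fun (hrep.rep₁ u v) m

theorem ρ_β_βM (hrep : IsRep3 𝕜 G br α β GM ρ αM βM) (u v : V) (m : M) :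
    ρ (β u) (β v) (βM m) = βM (ρ u v m) :=
  LinearMap.congr_fun (hrep.rep₂ u v) m

theorem ρ_swap_apply (hrep : IsRep3 𝕜 G br α β GM ρ αM βM) {i j : ZMod 2} {u v : V}
    (hu : u ∈ G i) (hv : v ∈ G j) (m : M) :
    ρ u v m = -((-1 : 𝕜) ^ (i.val * j.val)) • ρ v u m := by
  rw [hrep.ρskew i j u hu v hv]
  rfl

theorem prodMap_α_mem (hrep : IsRep3 𝕜 G br α β GM ρ αM βM)
    (halg : Is3BiHomLieSuper 𝕜 G br α β) {i : ZMod 2} {p : V × M}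
    (hp : p ∈ (G i).prod (GM i)) : α.prodMap αM p ∈ (G i).prod (GM i) :=
  Submodule.prodMap_mem_prod halg.α_even hrep.αM_even hp

theorem prodMap_β_mem (hrep : IsRep3 𝕜 G br α β GM ρ αM βM)
    (halg : Is3BiHomLieSuper 𝕜 G br α β) {i : ZMod 2} {p : V × M}
    (hp : p ∈ (G i).prod (GM i)) : β.prodMap βM p ∈ (G i).prod (GM i) :=
  Submodule.prodMap_mem_prod halg.β_even hrep.βM_even hp

/-- `rep₃` at `u = α⁻¹ β x₁`, `v = α⁻¹ β x₂`. -/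
theorem rep₃_twisted (hrep : IsRep3 𝕜 G br α β GM ρ αM βM)
    (halg : Is3BiHomLieSuper 𝕜 G br α β) (hαi₁ : ∀ x, α (αi x) = x)
    (hαi₂ : ∀ x, αi (α x) = x) {i₁ i₂ i j : ZMod 2} {x₁ x₂ x y : V} (h₁ : x₁ ∈ G i₁)
    (h₂ : x₂ ∈ G i₂) (hx : x ∈ G i) (hy : y ∈ G j) (n : M) :
    ρ (β (β x₁)) (β (β x₂)) (ρ (β x) (β y) n) =
      (-1 : 𝕜) ^ ((i₁.val + i₂.val) * (i.val + j.val)) •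
          ρ (β (β x)) (β (β y)) (ρ (β x₁) (β x₂) n) -
        (-1 : 𝕜) ^ ((i₁ + i₂ + i).val * j.val) •
          ρ (β (β y)) (br (β (αi (β x₁))) (β (αi (β x₂))) (β x)) (βM n) +
      (-1 : 𝕜) ^ (i.val * (i₁.val + i₂.val)) •
        ρ (β (β x)) (br (β (αi (β x₁))) (β (αi (β x₂))) (β y)) (βM n) := by
  have hu₁ := halg.αi_mem hαi₁ hαi₂ (halg.β_even i₁ x₁ h₁)
  have hu₂ := halg.αi_mem hαi₁ hαi₂ (halg.β_even i₂ x₂ h₂)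
  have h := LinearMap.congr_fun (hrep.rep₃ i₁ i₂ i j _ hu₁ _ hu₂ _
    (halg.β_even i x hx) _ (halg.β_even j y hy)) n
  simp only [LinearMap.add_apply, LinearMap.smul_apply, LinearMap.comp_apply,
    halg.α_β_αi hαi₁, hαi₁] at h
  rw [h, hrep.ρ_swap_apply (halg.br_grade _ _ _ _ (halg.β_even _ _ hu₁) _
    (halg.β_even _ _ hu₂) _ (halg.β_even _ _ hx)) (halg.β_even _ _ (halg.β_even _ _ hy))]
  module

/-- `rep₄` at `u = α⁻¹ β x₃`, `v = α⁻¹ β x₄`. -/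
theorem rep₄_twisted (hrep : IsRep3 𝕜 G br α β GM ρ αM βM)
    (halg : Is3BiHomLieSuper 𝕜 G br α β) (hαi₁ : ∀ x, α (αi x) = x)
    (hαi₂ : ∀ x, αi (α x) = x) {i₃ i₄ i₅ i : ZMod 2} {x₃ x₄ x₅ x : V} (h₃ : x₃ ∈ G i₃)
    (h₄ : x₄ ∈ G i₄) (h₅ : x₅ ∈ G i₅) (hx : x ∈ G i) (n : M) :
    ρ (β (β x)) (br (β (αi (β x₃))) (β (αi (β x₄))) (β x₅)) (βM n) =
      (-1 : 𝕜) ^ ((i.val + i₃.val) * (i₄.val + i₅.val)) •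
          ρ (β (β x₄)) (β (β x₅)) (ρ (β x) (β x₃) n) -
        (-1 : 𝕜) ^ (i.val * (i₃.val + i₅.val) + i₄.val * i₅.val) •
          ρ (β (β x₃)) (β (β x₅)) (ρ (β x) (β x₄) n) +
      (-1 : 𝕜) ^ (i.val * (i₃.val + i₄.val)) •
        ρ (β (β x₃)) (β (β x₄)) (ρ (β x) (β x₅) n) := by
  have hu₃ := halg.αi_mem hαi₁ hαi₂ (halg.β_even i₃ x₃ h₃)
  have hu₄ := halg.αi_mem hαi₁ hαi₂ (halg.β_even i₄ x₄ h₄)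
  have hβ : ∀ {j : ZMod 2} {y : V}, y ∈ G j → β y ∈ G j := fun {j} {y} => halg.β_even j y
  have h := LinearMap.congr_fun (hrep.rep₄ i₃ i₄ i₅ i _ hu₃ _ hu₄ _ (hβ h₅) _ (hβ hx)) n
  simp only [LinearMap.add_apply, LinearMap.smul_apply, LinearMap.comp_apply,
    halg.α_β_αi hαi₁, hαi₁] at h
  rw [hrep.ρ_swap_apply (hβ (hβ hx))
      (halg.br_grade _ _ _ _ (hβ hu₃) _ (hβ hu₄) _ (hβ h₅)), h,
    hrep.ρ_swap_apply (hβ (hβ h₅)) (hβ (hβ h₃)), hrep.ρ_swap_apply (hβ h₃) (hβ hx),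
    hrep.ρ_swap_apply (hβ h₄) (hβ hx), hrep.ρ_swap_apply (hβ h₅) (hβ hx)]
  rcases ZMod.eq_zero_or_eq_one i with rfl | rfl <;>
    rcases ZMod.eq_zero_or_eq_one i₃ with rfl | rfl <;>
    rcases ZMod.eq_zero_or_eq_one i₄ with rfl | rfl <;>
    rcases ZMod.eq_zero_or_eq_one i₅ with rfl | rfl <;>
    simp only [CharTwo.add_self_eq_zero, add_zero, zero_add, ZMod.val_zero, ZMod.val_one,
      map_smul] <;>
    module

end IsRep3

local notation "𝕋" => extBracketSnd θ ρ β αi αM βMi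

theorem extBracketSnd_mem (halg : Is3BiHomLieSuper 𝕜 G br α β)
    (hrep : IsRep3 𝕜 G br α β GM ρ αM βM) (hcoc : Is3Cocycle 𝕜 G br α β GM ρ αM βM θ)
    (hαi₁ : ∀ x, α (αi x) = x) (hαi₂ : ∀ x, αi (α x) = x)
    (hβMi₁ : ∀ m, βM (βMi m) = m) (hβMi₂ : ∀ m, βMi (βM m) = m)
    {i j k : ZMod 2} {u v w : V} {x y z : M} (hu : u ∈ G i) (hv : v ∈ G j) (hw : w ∈ G k)
    (hx : x ∈ GM i) (hy : y ∈ GM j) (hz : z ∈ GM k) :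
    𝕋 i j k u v w x y z ∈ GM (i + j + k) := by
  have hw' : αi (β w) ∈ G k := halg.αi_mem hαi₁ hαi₂ (halg.β_even k w hw)
  have hαβ : ∀ {l : ZMod 2} {m : M}, m ∈ GM l → αM (βMi m) ∈ GM l := fun hm =>
    hrep.αM_even _ _ (Submodule.mem_of_inverse hrep.supM hrep.infM hβMi₁ hβMi₂ hrep.βM_even hm)
  refine add_mem (sub_mem (add_mem (hcoc.θeven i j k u hu v hv w hw)
    (hrep.ρeven i j k u hu v hv z hz)) (Submodule.smul_mem _ _ ?_)) (Submodule.smul_mem _ _ ?_)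
  · rw [add_right_comm]
    exact hrep.ρeven i k j u hu _ hw' _ (hαβ hy)
  · rw [show i + j + k = j + k + i by ring]
    exact hrep.ρeven j k i v hv _ hw' _ (hαβ hx)

theorem αM_extBracketSnd (halg : Is3BiHomLieSuper 𝕜 G br α β)
    (hrep : IsRep3 𝕜 G br α β GM ρ αM βM) (hcoc : Is3Cocycle 𝕜 G br α β GM ρ αM βM θ)
    (hαi₁ : ∀ x, α (αi x) = x) (hαi₂ : ∀ x, αi (α x) = x)
    (hβMi₁ : ∀ m, βM (βMi m) = m) (hβMi₂ : ∀ m, βMi (βM m) = m)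
    (i j k : ZMod 2) (u v w : V) (x y z : M) :
    αM (𝕋 i j k u v w x y z) = 𝕋 i j k (α u) (α v) (α w) (αM x) (αM y) (αM z) := by
  simp only [extBracketSnd, map_add, map_sub, map_smul, hcoc.equiv_α, ← hrep.ρ_α_αM, hαi₁,
    halg.αi_β_α hαi₂, hrep.βMi_αM hβMi₁ hβMi₂]

theorem βM_extBracketSnd (halg : Is3BiHomLieSuper 𝕜 G br α β)
    (hrep : IsRep3 𝕜 G br α β GM ρ αM βM) (hcoc : Is3Cocycle 𝕜 G br α β GM ρ αM βM θ)
    (hαi₁ : ∀ x, α (αi x) = x) (hαi₂ : ∀ x, αi (α x) = x)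
    (hβMi₁ : ∀ m, βM (βMi m) = m) (hβMi₂ : ∀ m, βMi (βM m) = m)
    (i j k : ZMod 2) (u v w : V) (x y z : M) :
    βM (𝕋 i j k u v w x y z) = 𝕋 i j k (β u) (β v) (β w) (βM x) (βM y) (βM z) := by
  simp only [extBracketSnd, map_add, map_sub, map_smul, hcoc.equiv_β, ← hrep.ρ_β_βM,
    halg.αi_β hαi₁ hαi₂, ← hrep.commM, hβMi₁, hβMi₂]

theorem extBracketSnd_swap₁₂ (halg : Is3BiHomLieSuper 𝕜 G br α β)
    (hrep : IsRep3 𝕜 G br α β GM ρ αM βM) (hcoc : Is3Cocycle 𝕜 G br α β GM ρ αM βM θ)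
    (hαi₂ : ∀ x, αi (α x) = x) (hβMi₂ : ∀ m, βMi (βM m) = m)
    {i j : ZMod 2} (k : ZMod 2) {u v : V} (hu : u ∈ G i) (hv : v ∈ G j) (w : V) (x y z : M) :
    𝕋 i j k (β u) (β v) (α w) (βM x) (βM y) (αM z) =
      -((-1 : 𝕜) ^ (i.val * j.val)) • 𝕋 j i k (β v) (β u) (α w) (βM y) (βM x) (αM z) := by
  simp only [extBracketSnd, halg.αi_β_α hαi₂, hβMi₂]
  have hθ := hcoc.cskew₁ i j u hu v hv w
  have hρ := hrep.ρ_swap_apply (halg.β_even i u hu) (halg.β_even j v hv) (αM z)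
  rcases ZMod.eq_zero_or_eq_one i with rfl | rfl <;>
    rcases ZMod.eq_zero_or_eq_one j with rfl | rfl <;>
    rcases ZMod.eq_zero_or_eq_one k with rfl | rfl <;>
    linear_combination (norm := (simp only [ZMod.val_zero, ZMod.val_one]; module)) hθ + hρ

theorem extBracketSnd_swap₂₃ (halg : Is3BiHomLieSuper 𝕜 G br α β)
    (hrep : IsRep3 𝕜 G br α β GM ρ αM βM) (hcoc : Is3Cocycle 𝕜 G br α β GM ρ αM βM θ)
    (hαi₂ : ∀ x, αi (α x) = x) (hβMi₂ : ∀ m, βMi (βM m) = m)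
    (i : ZMod 2) {j k : ZMod 2} (u : V) {v w : V} (hv : v ∈ G j) (hw : w ∈ G k) (x y z : M) :
    𝕋 i j k (β u) (β v) (α w) (βM x) (βM y) (αM z) =
      -((-1 : 𝕜) ^ (j.val * k.val)) • 𝕋 i k j (β u) (β w) (α v) (βM x) (βM z) (αM y) := by
  simp only [extBracketSnd, halg.αi_β_α hαi₂, hβMi₂]
  have hθ := hcoc.cskew₂ j k v hv w hw u
  have hρ : (-1 : 𝕜) ^ (i.val * (j.val + k.val)) • ρ (β v) (β w) (αM x) =
      (-1 : 𝕜) ^ (i.val * (j.val + k.val)) • -((-1 : 𝕜) ^ (j.val * k.val)) •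
        ρ (β w) (β v) (αM x) := by
    rw [← hrep.ρ_swap_apply (halg.β_even j v hv) (halg.β_even k w hw)]
  rcases ZMod.eq_zero_or_eq_one i with rfl | rfl <;>
    rcases ZMod.eq_zero_or_eq_one j with rfl | rfl <;>
    rcases ZMod.eq_zero_or_eq_one k with rfl | rfl <;>
    linear_combination (norm := (simp only [ZMod.val_zero, ZMod.val_one]; module)) hθ + hρ

set_option maxHeartbeats 1000000 in
theorem extBracketSnd_jacobi (halg : Is3BiHomLieSuper 𝕜 G br α β)
    (hrep : IsRep3 𝕜 G br α β GM ρ αM βM) (hcoc : Is3Cocycle 𝕜 G br α β GM ρ αM βM θ)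
    (hαi₁ : ∀ x, α (αi x) = x) (hαi₂ : ∀ x, αi (α x) = x) (hβMi₂ : ∀ m, βMi (βM m) = m)
    {i₁ i₂ i₃ i₄ i₅ : ZMod 2} {x₁ x₂ x₃ x₄ x₅ : V} (h₁ : x₁ ∈ G i₁) (h₂ : x₂ ∈ G i₂)
    (h₃ : x₃ ∈ G i₃) (h₄ : x₄ ∈ G i₄) (h₅ : x₅ ∈ G i₅) (m₁ m₂ m₃ m₄ m₅ : M) :
    𝕋 i₁ i₂ (i₃ + i₄ + i₅) (β (β x₁)) (β (β x₂)) (br (β x₃) (β x₄) (α x₅))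
        (βM (βM m₁)) (βM (βM m₂)) (𝕋 i₃ i₄ i₅ (β x₃) (β x₄) (α x₅) (βM m₃) (βM m₄) (αM m₅)) =
      (-1 : 𝕜) ^ ((i₄.val + i₅.val) * (i₁.val + i₂.val + i₃.val)) •
        𝕋 i₄ i₅ (i₁ + i₂ + i₃) (β (β x₄)) (β (β x₅)) (br (β x₁) (β x₂) (α x₃))
          (βM (βM m₄)) (βM (βM m₅)) (𝕋 i₁ i₂ i₃ (β x₁) (β x₂) (α x₃) (βM m₁) (βM m₂) (αM m₃)) -
      (-1 : 𝕜) ^ ((i₃.val + i₅.val) * (i₁.val + i₂.val) + i₄.val * i₅.val) •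
        𝕋 i₃ i₅ (i₁ + i₂ + i₄) (β (β x₃)) (β (β x₅)) (br (β x₁) (β x₂) (α x₄))
          (βM (βM m₃)) (βM (βM m₅)) (𝕋 i₁ i₂ i₄ (β x₁) (β x₂) (α x₄) (βM m₁) (βM m₂) (αM m₄)) +
      (-1 : 𝕜) ^ ((i₃.val + i₄.val) * (i₁.val + i₂.val)) •
        𝕋 i₃ i₄ (i₁ + i₂ + i₅) (β (β x₃)) (β (β x₄)) (br (β x₁) (β x₂) (α x₅))
          (βM (βM m₃)) (βM (βM m₄)) (𝕋 i₁ i₂ i₅ (β x₁) (β x₂) (α x₅) (βM m₁) (βM m₂) (αM m₅)) := by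
  have hC := hcoc.cocycle i₁ i₂ i₃ i₄ i₅ x₁ h₁ x₂ h₂ x₃ h₃ x₄ h₄ x₅ h₅
  -- each instance is scaled by the sign with which its `mₖ` enters the left-hand side
  have e₃ := congrArg (HSMul.hSMul ((-1 : 𝕜) ^ (i₃.val * (i₄.val + i₅.val))))
    (hrep.rep₃_twisted halg hαi₁ hαi₂ h₁ h₂ h₄ h₅ (αM m₃))
  have e₄ := congrArg (HSMul.hSMul (-(-1 : 𝕜) ^ (i₄.val * i₅.val)))
    (hrep.rep₃_twisted halg hαi₁ hαi₂ h₁ h₂ h₃ h₅ (αM m₄))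
  have e₅ := hrep.rep₃_twisted halg hαi₁ hαi₂ h₁ h₂ h₃ h₄ (αM m₅)
  have f₁ := congrArg (HSMul.hSMul ((-1 : 𝕜) ^ (i₁.val * (i₂.val + (i₃ + i₄ + i₅).val))))
    (hrep.rep₄_twisted halg hαi₁ hαi₂ h₃ h₄ h₅ h₂ (αM m₁))
  have f₂ := congrArg (HSMul.hSMul (-(-1 : 𝕜) ^ (i₂.val * (i₃ + i₄ + i₅).val)))
    (hrep.rep₄_twisted halg hαi₁ hαi₂ h₃ h₄ h₅ h₁ (αM m₂))
  simp only [extBracketSnd, map_add, map_sub, map_smul, halg.αi_β_α hαi₂, hβMi₂,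
    halg.αi_β_br hαi₁ hαi₂, hrep.commM]
  rcases ZMod.eq_zero_or_eq_one i₁ with rfl | rfl <;>
    rcases ZMod.eq_zero_or_eq_one i₂ with rfl | rfl <;>
    rcases ZMod.eq_zero_or_eq_one i₃ with rfl | rfl <;>
    rcases ZMod.eq_zero_or_eq_one i₄ with rfl | rfl <;>
    rcases ZMod.eq_zero_or_eq_one i₅ with rfl | rfl <;>
    linear_combination (norm := (simp only [CharTwo.add_self_eq_zero, add_zero, zero_add,
      ZMod.val_zero, ZMod.val_one]; module)) hC + e₃ + e₄ + e₅ + f₁ + f₂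

namespace IsExtBracket

variable {Br : V × M → V × M → V × M → V × M}

theorem mem (hBr : IsExtBracket G GM br θ ρ β αi αM βMi Br)
    (halg : Is3BiHomLieSuper 𝕜 G br α β) (hrep : IsRep3 𝕜 G br α β GM ρ αM βM)
    (hcoc : Is3Cocycle 𝕜 G br α β GM ρ αM βM θ)
    (hαi₁ : ∀ x, α (αi x) = x) (hαi₂ : ∀ x, αi (α x) = x)
    (hβMi₁ : ∀ m, βM (βMi m) = m) (hβMi₂ : ∀ m, βMi (βM m) = m)
    {i j k : ZMod 2} {p q r : V × M} (hp : p ∈ (G i).prod (GM i))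
    (hq : q ∈ (G j).prod (GM j)) (hr : r ∈ (G k).prod (GM k)) :
    Br p q r ∈ (G (i + j + k)).prod (GM (i + j + k)) := by
  rw [hBr i j k p q r hp hq hr]
  exact ⟨halg.br_grade i j k _ hp.1 _ hq.1 _ hr.1,
    extBracketSnd_mem halg hrep hcoc hαi₁ hαi₂ hβMi₁ hβMi₂ hp.1 hq.1 hr.1 hp.2 hq.2 hr.2⟩

theorem prodMap_bracket (hBr : IsExtBracket G GM br θ ρ β αi αM βMi Br)
    {f : V →ₗ[𝕜] V} {fM : M →ₗ[𝕜] M} (hf : ∀ i, ∀ x ∈ G i, f x ∈ G i)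
    (hfM : ∀ i, ∀ m ∈ GM i, fM m ∈ GM i) (hbr : ∀ u v w, f (br u v w) = br (f u) (f v) (f w))
    (hsnd : ∀ i j k u v w x y z,
      fM (𝕋 i j k u v w x y z) = 𝕋 i j k (f u) (f v) (f w) (fM x) (fM y) (fM z))
    {i j k : ZMod 2} {p q r : V × M} (hp : p ∈ (G i).prod (GM i))
    (hq : q ∈ (G j).prod (GM j)) (hr : r ∈ (G k).prod (GM k)) :
    f.prodMap fM (Br p q r) = Br (f.prodMap fM p) (f.prodMap fM q) (f.prodMap fM r) := by
  rw [hBr i j k p q r hp hq hr, hBr i j k _ _ _ (Submodule.prodMap_mem_prod hf hfM hp)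
    (Submodule.prodMap_mem_prod hf hfM hq) (Submodule.prodMap_mem_prod hf hfM hr)]
  simp only [LinearMap.prodMap_apply, hbr, hsnd]

theorem swap₁₂ (hBr : IsExtBracket G GM br θ ρ β αi αM βMi Br)
    (halg : Is3BiHomLieSuper 𝕜 G br α β) (hrep : IsRep3 𝕜 G br α β GM ρ αM βM)
    (hcoc : Is3Cocycle 𝕜 G br α β GM ρ αM βM θ)
    (hαi₂ : ∀ x, αi (α x) = x) (hβMi₂ : ∀ m, βMi (βM m) = m)
    {i j k : ZMod 2} {p q r : V × M} (hp : p ∈ (G i).prod (GM i))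
    (hq : q ∈ (G j).prod (GM j)) (hr : r ∈ (G k).prod (GM k)) :
    Br (β.prodMap βM p) (β.prodMap βM q) (α.prodMap αM r) =
      -((-1 : 𝕜) ^ (i.val * j.val)) • Br (β.prodMap βM q) (β.prodMap βM p) (α.prodMap αM r) := by
  have hB := fun {l : ZMod 2} {s : V × M} => hrep.prodMap_β_mem halg (i := l) (p := s)
  have hA := fun {l : ZMod 2} {s : V × M} => hrep.prodMap_α_mem halg (i := l) (p := s)
  rw [hBr i j k _ _ _ (hB hp) (hB hq) (hA hr), hBr j i k _ _ _ (hB hq) (hB hp) (hA hr)]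
  exact Prod.ext (halg.skew₁ i j _ hp.1 _ hq.1 _)
    (extBracketSnd_swap₁₂ halg hrep hcoc hαi₂ hβMi₂ k hp.1 hq.1 _ _ _ _)

theorem swap₂₃ (hBr : IsExtBracket G GM br θ ρ β αi αM βMi Br)
    (halg : Is3BiHomLieSuper 𝕜 G br α β) (hrep : IsRep3 𝕜 G br α β GM ρ αM βM)
    (hcoc : Is3Cocycle 𝕜 G br α β GM ρ αM βM θ)
    (hαi₂ : ∀ x, αi (α x) = x) (hβMi₂ : ∀ m, βMi (βM m) = m)
    {i j k : ZMod 2} {p q r : V × M} (hp : p ∈ (G i).prod (GM i))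
    (hq : q ∈ (G j).prod (GM j)) (hr : r ∈ (G k).prod (GM k)) :
    Br (β.prodMap βM p) (β.prodMap βM q) (α.prodMap αM r) =
      -((-1 : 𝕜) ^ (j.val * k.val)) • Br (β.prodMap βM p) (β.prodMap βM r) (α.prodMap αM q) := by
  have hB := fun {l : ZMod 2} {s : V × M} => hrep.prodMap_β_mem halg (i := l) (p := s)
  have hA := fun {l : ZMod 2} {s : V × M} => hrep.prodMap_α_mem halg (i := l) (p := s)
  rw [hBr i j k _ _ _ (hB hp) (hB hq) (hA hr), hBr i k j _ _ _ (hB hp) (hB hr) (hA hq)]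
  exact Prod.ext (halg.skew₂ j k _ hq.1 _ hr.1 _)
    (extBracketSnd_swap₂₃ halg hrep hcoc hαi₂ hβMi₂ i _ hq.1 hr.1 _ _ _)

theorem jacobi (hBr : IsExtBracket G GM br θ ρ β αi αM βMi Br)
    (halg : Is3BiHomLieSuper 𝕜 G br α β) (hrep : IsRep3 𝕜 G br α β GM ρ αM βM)
    (hcoc : Is3Cocycle 𝕜 G br α β GM ρ αM βM θ)
    (hαi₁ : ∀ x, α (αi x) = x) (hαi₂ : ∀ x, αi (α x) = x)
    (hβMi₁ : ∀ m, βM (βMi m) = m) (hβMi₂ : ∀ m, βMi (βM m) = m)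
    {i₁ i₂ i₃ i₄ i₅ : ZMod 2} {p₁ p₂ p₃ p₄ p₅ : V × M} (h₁ : p₁ ∈ (G i₁).prod (GM i₁))
    (h₂ : p₂ ∈ (G i₂).prod (GM i₂)) (h₃ : p₃ ∈ (G i₃).prod (GM i₃))
    (h₄ : p₄ ∈ (G i₄).prod (GM i₄)) (h₅ : p₅ ∈ (G i₅).prod (GM i₅)) :
    Br (β.prodMap βM (β.prodMap βM p₁)) (β.prodMap βM (β.prodMap βM p₂))
        (Br (β.prodMap βM p₃) (β.prodMap βM p₄) (α.prodMap αM p₅)) =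
      (-1 : 𝕜) ^ ((i₄.val + i₅.val) * (i₁.val + i₂.val + i₃.val)) •
          Br (β.prodMap βM (β.prodMap βM p₄)) (β.prodMap βM (β.prodMap βM p₅))
            (Br (β.prodMap βM p₁) (β.prodMap βM p₂) (α.prodMap αM p₃)) -
        (-1 : 𝕜) ^ ((i₃.val + i₅.val) * (i₁.val + i₂.val) + i₄.val * i₅.val) •
          Br (β.prodMap βM (β.prodMap βM p₃)) (β.prodMap βM (β.prodMap βM p₅))
            (Br (β.prodMap βM p₁) (β.prodMap βM p₂) (α.prodMap αM p₄)) +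
      (-1 : 𝕜) ^ ((i₃.val + i₄.val) * (i₁.val + i₂.val)) •
        Br (β.prodMap βM (β.prodMap βM p₃)) (β.prodMap βM (β.prodMap βM p₄))
          (Br (β.prodMap βM p₁) (β.prodMap βM p₂) (α.prodMap αM p₅)) := by
  have hB := fun {l : ZMod 2} {s : V × M} => hrep.prodMap_β_mem halg (i := l) (p := s)
  have hA := fun {l : ZMod 2} {s : V × M} => hrep.prodMap_α_mem halg (i := l) (p := s)
  have hmem : ∀ {a b c : ZMod 2} {s t u : V × M}, s ∈ (G a).prod (GM a) →
      t ∈ (G b).prod (GM b) → u ∈ (G c).prod (GM c) →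
      Br (β.prodMap βM s) (β.prodMap βM t) (α.prodMap αM u) ∈
        (G (a + b + c)).prod (GM (a + b + c)) := fun hs ht hu =>
    hBr.mem halg hrep hcoc hαi₁ hαi₂ hβMi₁ hβMi₂ (hB hs) (hB ht) (hA hu)
  rw [hBr _ _ _ _ _ _ (hB (hB h₁)) (hB (hB h₂)) (hmem h₃ h₄ h₅),
    hBr _ _ _ _ _ _ (hB (hB h₄)) (hB (hB h₅)) (hmem h₁ h₂ h₃),
    hBr _ _ _ _ _ _ (hB (hB h₃)) (hB (hB h₅)) (hmem h₁ h₂ h₄),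
    hBr _ _ _ _ _ _ (hB (hB h₃)) (hB (hB h₄)) (hmem h₁ h₂ h₅),
    hBr _ _ _ _ _ _ (hB h₃) (hB h₄) (hA h₅), hBr _ _ _ _ _ _ (hB h₁) (hB h₂) (hA h₃),
    hBr _ _ _ _ _ _ (hB h₁) (hB h₂) (hA h₄), hBr _ _ _ _ _ _ (hB h₁) (hB h₂) (hA h₅)]
  simp only [LinearMap.prodMap_apply, Prod.smul_mk, Prod.mk_sub_mk, Prod.mk_add_mk]
  exact Prod.ext (halg.jacobi i₁ i₂ i₃ i₄ i₅ _ h₁.1 _ h₂.1 _ h₃.1 _ h₄.1 _ h₅.1)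
    (extBracketSnd_jacobi halg hrep hcoc hαi₁ hαi₂ hβMi₂ h₁.1 h₂.1 h₃.1 h₄.1 h₅.1 _ _ _ _ _)

end IsExtBracket

end Extension

theorem statement10_general {𝕜 V M : Type*} [Field 𝕜] [AddCommGroup V] [Module 𝕜 V]
    [AddCommGroup M] [Module 𝕜 M]
    (G : ZMod 2 → Submodule 𝕜 V) (br : V → V → V → V) (α β : V →ₗ[𝕜] V)
    (GM : ZMod 2 → Submodule 𝕜 M) (ρ : V → V → M →ₗ[𝕜] M) (αM βM : M →ₗ[𝕜] M)
    (θ : V → V → V → M)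
    (halg : Is3BiHomLieSuper 𝕜 G br α β)
    (hrep : IsRep3 𝕜 G br α β GM ρ αM βM)
    (hcoc : Is3Cocycle 𝕜 G br α β GM ρ αM βM θ)
    (αi : V →ₗ[𝕜] V) (hαi₁ : ∀ x, α (αi x) = x) (hαi₂ : ∀ x, αi (α x) = x)
    (βMi : M →ₗ[𝕜] M) (hβMi₁ : ∀ m, βM (βMi m) = m) (hβMi₂ : ∀ m, βMi (βM m) = m)
    (Br : V × M → V × M → V × M → V × M)
    (hadd₁ : ∀ p p' q r, Br (p + p') q r = Br p q r + Br p' q r)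
    (hsmul₁ : ∀ (c : 𝕜) p q r, Br (c • p) q r = c • Br p q r)
    (hadd₂ : ∀ p q q' r, Br p (q + q') r = Br p q r + Br p q' r)
    (hsmul₂ : ∀ (c : 𝕜) p q r, Br p (c • q) r = c • Br p q r)
    (hadd₃ : ∀ p q r r', Br p q (r + r') = Br p q r + Br p q r')
    (hsmul₃ : ∀ (c : 𝕜) p q r, Br p q (c • r) = c • Br p q r)
    (hBr : ∀ (i j k : ZMod 2) (u v w : V) (x y z : M),
      u ∈ G i → x ∈ GM i → v ∈ G j → y ∈ GM j → w ∈ G k → z ∈ GM k →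
      Br (u, x) (v, y) (w, z) =
        (br u v w,
          θ u v w + ρ u v z - (-1 : 𝕜) ^ (j.val * k.val) • ρ u (αi (β w)) (αM (βMi y)) +
            (-1 : 𝕜) ^ (i.val * (j.val + k.val)) • ρ v (αi (β w)) (αM (βMi x)))) :
    Is3BiHomLieSuper 𝕜 (fun i => (G i).prod (GM i)) Br (α.prodMap αM) (β.prodMap βM) := by
  have hBr' : IsExtBracket G GM br θ ρ β αi αM βMi Br := fun i j k p q r hp hq hr =>
    hBr i j k _ _ _ _ _ _ hp.1 hp.2 hq.1 hq.2 hr.1 hr.2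
  let P : ZMod 2 → Submodule 𝕜 (V × M) := fun i => (G i).prod (GM i)
  have hsup : P 0 ⊔ P 1 = ⊤ := by
    rw [Submodule.prod_sup_prod, halg.sup_top, hrep.supM, Submodule.prod_top]
  refine
    { sup_top := hsup
      inf_bot := by rw [Submodule.prod_inf_prod, halg.inf_bot, hrep.infM, Submodule.prod_bot]
      add₁ := hadd₁, smul₁ := hsmul₁, add₂ := hadd₂, smul₂ := hsmul₂, add₃ := hadd₃, smul₃ := hsmul₃
      α_even := fun _ _ => hrep.prodMap_α_mem halg
      β_even := fun _ _ => hrep.prodMap_β_mem halg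
      br_grade := fun _ _ _ _ hp _ hq _ hr =>
        hBr'.mem halg hrep hcoc hαi₁ hαi₂ hβMi₁ hβMi₂ hp hq hr
      comm := fun p => Prod.ext (halg.comm p.1) (hrep.commM p.2)
      mult_α := Submodule.map_bracket_of_homogeneous hsup hadd₁ hadd₂ hadd₃ _
        fun _ _ _ _ hp _ hq _ hr => hBr'.prodMap_bracket halg.α_even hrep.αM_even halg.mult_α
          (αM_extBracketSnd halg hrep hcoc hαi₁ hαi₂ hβMi₁ hβMi₂) hp hq hr
      mult_β := Submodule.map_bracket_of_homogeneous hsup hadd₁ hadd₂ hadd₃ _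
        fun _ _ _ _ hp _ hq _ hr => hBr'.prodMap_bracket halg.β_even hrep.βM_even halg.mult_β
          (βM_extBracketSnd halg hrep hcoc hαi₁ hαi₂ hβMi₁ hβMi₂) hp hq hr
      jacobi := fun _ _ _ _ _ _ h₁ _ h₂ _ h₃ _ h₄ _ h₅ =>
        hBr'.jacobi halg hrep hcoc hαi₁ hαi₂ hβMi₁ hβMi₂ h₁ h₂ h₃ h₄ h₅
      skew₁ := ?_
      skew₂ := ?_ }
  · intro i j p hp q hq r
    induction r using Submodule.induction_of_sup_eq_top hsup with
    | mem k r hr => exact hBr'.swap₁₂ halg hrep hcoc hαi₂ hβMi₂ hp hq hr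
    | add r r' h h' => rw [map_add, hadd₃, hadd₃, h, h', smul_add]
  · intro j k q hq r hr p
    induction p using Submodule.induction_of_sup_eq_top hsup with
    | mem i p hp => exact hBr'.swap₂₃ halg hrep hcoc hαi₂ hβMi₂ hp hq hr
    | add p p' h h' => rw [map_add, hadd₁, hadd₁, h, h', smul_add]

/-- `T_θ`-extension: given a 3-BiHom-Lie superalgebra `g`, a representation
`(M, ρ, α_M, β_M)` with `α`, `β_M` surjective (invertible) and a 3-cocycle `θ`,
any trilinear bracket on `g ⊕ M` which on homogeneous elements is given by
`[u+x,v+y,w+z]_θ = [u,v,w] + θ(u,v,w) + ρ(u,v)z − (−1)^{|v||w|}ρ(u,α⁻¹β w)(α_M β_M⁻¹ y)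
  + (−1)^{|u|(|v|+|w|)}ρ(v,α⁻¹β w)(α_M β_M⁻¹ x)`
makes `(g ⊕ M, [·,·,·]_θ, α+α_M, β+β_M)` a 3-BiHom-Lie superalgebra. -/
theorem statement10 {𝕜 V M : Type*} [Field 𝕜] [AddCommGroup V] [Module 𝕜 V]
    [AddCommGroup M] [Module 𝕜 M]
    (G : ZMod 2 → Submodule 𝕜 V) (br : V → V → V → V) (α β : V →ₗ[𝕜] V)
    (GM : ZMod 2 → Submodule 𝕜 M) (ρ : V → V → M →ₗ[𝕜] M) (αM βM : M →ₗ[𝕜] M)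
    (θ : V → V → V → M)
    (halg : Is3BiHomLieSuper 𝕜 G br α β)
    (hrep : IsRep3 𝕜 G br α β GM ρ αM βM)
    (hcoc : Is3Cocycle 𝕜 G br α β GM ρ αM βM θ)
    (hαsurj : Function.Surjective α) (hβMsurj : Function.Surjective βM)
    (αi : V →ₗ[𝕜] V) (hαi₁ : ∀ x, α (αi x) = x) (hαi₂ : ∀ x, αi (α x) = x)
    (βMi : M →ₗ[𝕜] M) (hβMi₁ : ∀ m, βM (βMi m) = m) (hβMi₂ : ∀ m, βMi (βM m) = m)
    (Br : V × M → V × M → V × M → V × M)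
    (hadd₁ : ∀ p p' q r, Br (p + p') q r = Br p q r + Br p' q r)
    (hsmul₁ : ∀ (c : 𝕜) p q r, Br (c • p) q r = c • Br p q r)
    (hadd₂ : ∀ p q q' r, Br p (q + q') r = Br p q r + Br p q' r)
    (hsmul₂ : ∀ (c : 𝕜) p q r, Br p (c • q) r = c • Br p q r)
    (hadd₃ : ∀ p q r r', Br p q (r + r') = Br p q r + Br p q r')
    (hsmul₃ : ∀ (c : 𝕜) p q r, Br p q (c • r) = c • Br p q r)
    (hBr : ∀ (i j k : ZMod 2) (u v w : V) (x y z : M),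
      u ∈ G i → x ∈ GM i → v ∈ G j → y ∈ GM j → w ∈ G k → z ∈ GM k →
      Br (u, x) (v, y) (w, z) =
        (br u v w,
          θ u v w + ρ u v z - (-1 : 𝕜) ^ (j.val * k.val) • ρ u (αi (β w)) (αM (βMi y)) +
            (-1 : 𝕜) ^ (i.val * (j.val + k.val)) • ρ v (αi (β w)) (αM (βMi x)))) :
    Is3BiHomLieSuper 𝕜 (fun i => (G i).prod (GM i)) Br (α.prodMap αM) (β.prodMap βM) :=
  statement10_general G br α β GM ρ αM βM θ halg hrep hcoc αi hαi₁ hαi₂ βMi hβMi₁ hβMi₂ Br hadd₁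
    hsmul₁ hadd₂ hsmul₂ hadd₃ hsmul₃ hBr
end

section
/- Under the assumptions that θ is a 3-cocycle and θ_f is the coboundary-type 3-cocycle associated to an even linear map f : g → M (with f∘α = α_M∘f, f∘β = β_M∘f), the map σ : T_θ(g) → T_{θ+θ_f}(g) defined by σ(v + x) = v + f(v) + x for v ∈ g, x ∈ M is an isomorphism of 3-BiHom-Lie superalgebras. -/
/-- The map `σ(v + x) = v + f(v) + x` on `g ⊕ M`, as a linear map. -/
noncomputable def sigmaMap (𝕜 : Type*) [Field 𝕜] {V M : Type*} [AddCommGroup V] [Module 𝕜 V]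
    [AddCommGroup M] [Module 𝕜 M] (f : V →ₗ[𝕜] M) : V × M →ₗ[𝕜] V × M :=
  (LinearMap.fst 𝕜 V M).prod (f ∘ₗ LinearMap.fst 𝕜 V M + LinearMap.snd 𝕜 V M)

/-!
Both `σ ∘ [·,·,·]_θ` and `[σ ·, σ ·, σ ·]_{θ+θ_f}` are additive in each argument, so it suffices
to compare them on homogeneous triples. There, substituting `v + f v` for `v` in the
`T_{θ+θ_f}`-bracket produces the extra terms `ρ(u,v)(f w)` and
`ρ(·, α⁻¹β w)(α_M β_M⁻¹ f ·)`. Since `α_M β_M⁻¹ f = f α β⁻¹`, they cancel against `θ_f` up to its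
term `f [u,v,w]`, which is exactly the `M`-component that σ adds on the other side.
-/

section SigmaMap

variable {𝕜 V M : Type*} [Field 𝕜] [AddCommGroup V] [Module 𝕜 V] [AddCommGroup M] [Module 𝕜 M]

@[simp]
theorem sigmaMap_apply (f : V →ₗ[𝕜] M) (v : V) (x : M) :
    sigmaMap 𝕜 f (v, x) = (v, f v + x) := by
  simp [sigmaMap]

theorem sigmaMap_bijective (f : V →ₗ[𝕜] M) : Function.Bijective (sigmaMap 𝕜 f) :=
  Function.bijective_iff_has_inverse.mpr
    ⟨fun p => (p.1, p.2 - f p.1), fun ⟨_, _⟩ => by simp, fun ⟨_, _⟩ => by simp⟩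

theorem sigmaMap_prodMap_comm {f : V →ₗ[𝕜] M} {γ : V →ₗ[𝕜] V} {γM : M →ₗ[𝕜] M}
    (hf : ∀ x, f (γ x) = γM (f x)) (p : V × M) :
    sigmaMap 𝕜 f (γ.prodMap γM p) = γ.prodMap γM (sigmaMap 𝕜 f p) := by
  obtain ⟨v, x⟩ := p
  simp [hf]

theorem αM_βMi_apply_eq {f : V →ₗ[𝕜] M} {α β βi : V →ₗ[𝕜] V} {αM βM βMi : M →ₗ[𝕜] M}
    (hfα : ∀ x, f (α x) = αM (f x)) (hfβ : ∀ x, f (β x) = βM (f x))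
    (hβi : ∀ x, β (βi x) = x) (hβMi : ∀ m, βMi (βM m) = m) (v : V) :
    αM (βMi (f v)) = f (α (βi v)) := by
  rw [hfα]
  conv_lhs => rw [← hβi v, hfβ, hβMi]

end SigmaMap

section GradedExt

variable {R P Q : Type*} [Semiring R] [AddCommMonoid P] [Module R P] [Add Q]

theorem eq_of_eq_on_homogeneous {N : ZMod 2 → Submodule R P} (hN : N 0 ⊔ N 1 = ⊤)
    {g₁ g₂ : P → Q} (hg₁ : ∀ a b, g₁ (a + b) = g₁ a + g₁ b) (hg₂ : ∀ a b, g₂ (a + b) = g₂ a + g₂ b)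
    (h : ∀ i, ∀ p ∈ N i, g₁ p = g₂ p) (p : P) : g₁ p = g₂ p := by
  obtain ⟨a, ha, b, hb, rfl⟩ := Submodule.mem_sup.mp (hN ▸ Submodule.mem_top : p ∈ N 0 ⊔ N 1)
  rw [hg₁, hg₂, h 0 a ha, h 1 b hb]

theorem eq_of_eq_on_homogeneous₃ {N : ZMod 2 → Submodule R P} (hN : N 0 ⊔ N 1 = ⊤)
    {F₁ F₂ : P → P → P → Q}
    (hF₁₁ : ∀ a a' b c, F₁ (a + a') b c = F₁ a b c + F₁ a' b c)
    (hF₁₂ : ∀ a b b' c, F₁ a (b + b') c = F₁ a b c + F₁ a b' c)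
    (hF₁₃ : ∀ a b c c', F₁ a b (c + c') = F₁ a b c + F₁ a b c')
    (hF₂₁ : ∀ a a' b c, F₂ (a + a') b c = F₂ a b c + F₂ a' b c)
    (hF₂₂ : ∀ a b b' c, F₂ a (b + b') c = F₂ a b c + F₂ a b' c)
    (hF₂₃ : ∀ a b c c', F₂ a b (c + c') = F₂ a b c + F₂ a b c')
    (h : ∀ i j k, ∀ a ∈ N i, ∀ b ∈ N j, ∀ c ∈ N k, F₁ a b c = F₂ a b c) (a b c : P) :
    F₁ a b c = F₂ a b c :=
  eq_of_eq_on_homogeneous hN (hF₁₁ · · b c) (hF₂₁ · · b c) (fun i a ha =>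
    eq_of_eq_on_homogeneous hN (hF₁₂ a · · c) (hF₂₂ a · · c) (fun j b hb =>
      eq_of_eq_on_homogeneous hN (hF₁₃ a b) (hF₂₃ a b) (fun k c hc => h i j k a ha b hb c hc) c)
      b) a

end GradedExt

section Extension

variable {𝕜 V M : Type*} [Field 𝕜] [AddCommGroup V] [Module 𝕜 V] [AddCommGroup M] [Module 𝕜 M]
  {G : ZMod 2 → Submodule 𝕜 V} {GM : ZMod 2 → Submodule 𝕜 M}

theorem prod_sup_prod_eq_top {p p' : Submodule 𝕜 V} {q q' : Submodule 𝕜 M} (hp : p ⊔ p' = ⊤)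
    (hq : q ⊔ q' = ⊤) : p.prod q ⊔ p'.prod q' = ⊤ := by
  rw [Submodule.prod_sup_prod, hp, hq, Submodule.prod_top]

theorem sigmaMap_bracket_of_mem {br : V → V → V → V} {α β αi βi : V →ₗ[𝕜] V}
    {ρ : V → V → M →ₗ[𝕜] M} {αM βMi : M →ₗ[𝕜] M} {θ Θf : V → V → V → M} {f : V →ₗ[𝕜] M}
    {Br₁ Br₂ : V × M → V × M → V × M → V × M}
    (hfe : ∀ i, ∀ x ∈ G i, f x ∈ GM i)
    (htwist : ∀ v, αM (βMi (f v)) = f (α (βi v)))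
    (hΘf : ∀ (i j k : ZMod 2), ∀ x ∈ G i, ∀ y ∈ G j, ∀ z ∈ G k,
      Θf x y z =
        f (br x y z) - ρ x y (f z) +
          (-1 : 𝕜) ^ (j.val * k.val) • ρ x (αi (β z)) (f (α (βi y))) -
          (-1 : 𝕜) ^ ((j.val + k.val) * i.val) • ρ y (αi (β z)) (f (α (βi x))))
    (hBr₁ : ∀ (i j k : ZMod 2) (u v w : V) (x y z : M),
      u ∈ G i → x ∈ GM i → v ∈ G j → y ∈ GM j → w ∈ G k → z ∈ GM k →
      Br₁ (u, x) (v, y) (w, z) =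
        (br u v w,
          θ u v w + ρ u v z - (-1 : 𝕜) ^ (j.val * k.val) • ρ u (αi (β w)) (αM (βMi y)) +
            (-1 : 𝕜) ^ (i.val * (j.val + k.val)) • ρ v (αi (β w)) (αM (βMi x))))
    (hBr₂ : ∀ (i j k : ZMod 2) (u v w : V) (x y z : M),
      u ∈ G i → x ∈ GM i → v ∈ G j → y ∈ GM j → w ∈ G k → z ∈ GM k →
      Br₂ (u, x) (v, y) (w, z) =
        (br u v w,
          (θ u v w + Θf u v w) + ρ u v z -
            (-1 : 𝕜) ^ (j.val * k.val) • ρ u (αi (β w)) (αM (βMi y)) +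
            (-1 : 𝕜) ^ (i.val * (j.val + k.val)) • ρ v (αi (β w)) (αM (βMi x))))
    {i j k : ZMod 2} {a b c : V × M} (ha : a ∈ (G i).prod (GM i)) (hb : b ∈ (G j).prod (GM j))
    (hc : c ∈ (G k).prod (GM k)) :
    sigmaMap 𝕜 f (Br₁ a b c) = Br₂ (sigmaMap 𝕜 f a) (sigmaMap 𝕜 f b) (sigmaMap 𝕜 f c) := by
  obtain ⟨u, x⟩ := a
  obtain ⟨v, y⟩ := b
  obtain ⟨w, z⟩ := c
  obtain ⟨hu, hx⟩ := ha
  obtain ⟨hv, hy⟩ := hb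
  obtain ⟨hw, hz⟩ := hc
  rw [hBr₁ i j k u v w x y z hu hx hv hy hw hz, sigmaMap_apply, sigmaMap_apply, sigmaMap_apply,
    sigmaMap_apply, hBr₂ i j k u v w _ _ _ hu (add_mem (hfe i u hu) hx) hv
      (add_mem (hfe j v hv) hy) hw (add_mem (hfe k w hw) hz),
    hΘf i j k u hu v hv w hw, ← htwist, ← htwist]
  simp only [map_add, Prod.mk.injEq, true_and]
  module

end Extension

theorem statement12_general {𝕜 V M : Type*} [Field 𝕜] [AddCommGroup V] [Module 𝕜 V]
    [AddCommGroup M] [Module 𝕜 M]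
    (G : ZMod 2 → Submodule 𝕜 V) (br : V → V → V → V) (α β : V →ₗ[𝕜] V)
    (GM : ZMod 2 → Submodule 𝕜 M) (ρ : V → V → M →ₗ[𝕜] M) (αM βM : M →ₗ[𝕜] M)
    (θ : V → V → V → M)
    (halg : Is3BiHomLieSuper 𝕜 G br α β)
    (hrep : IsRep3 𝕜 G br α β GM ρ αM βM)
    (αi : V →ₗ[𝕜] V)
    (βi : V →ₗ[𝕜] V) (hβi₁ : ∀ x, β (βi x) = x)
    (βMi : M →ₗ[𝕜] M) (hβMi₂ : ∀ m, βMi (βM m) = m)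
    (f : V →ₗ[𝕜] M)
    (hfe : ∀ i, ∀ x ∈ G i, f x ∈ GM i)
    (hfα : ∀ x, f (α x) = αM (f x)) (hfβ : ∀ x, f (β x) = βM (f x))
    -- the coboundary-type 3-cocycle θ_f
    (Θf : V → V → V → M)
    (hΘf : ∀ (i j k : ZMod 2), ∀ x ∈ G i, ∀ y ∈ G j, ∀ z ∈ G k,
      Θf x y z =
        f (br x y z) - ρ x y (f z) +
          (-1 : 𝕜) ^ (j.val * k.val) • ρ x (αi (β z)) (f (α (βi y))) -
          (-1 : 𝕜) ^ ((j.val + k.val) * i.val) • ρ y (αi (β z)) (f (α (βi x))))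
    -- the T_θ-extension bracket
    (Br₁ : V × M → V × M → V × M → V × M)
    (h₁add₁ : ∀ p p' q r, Br₁ (p + p') q r = Br₁ p q r + Br₁ p' q r)
    (h₁add₂ : ∀ p q q' r, Br₁ p (q + q') r = Br₁ p q r + Br₁ p q' r)
    (h₁add₃ : ∀ p q r r', Br₁ p q (r + r') = Br₁ p q r + Br₁ p q r')
    (hBr₁ : ∀ (i j k : ZMod 2) (u v w : V) (x y z : M),
      u ∈ G i → x ∈ GM i → v ∈ G j → y ∈ GM j → w ∈ G k → z ∈ GM k →
      Br₁ (u, x) (v, y) (w, z) =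
        (br u v w,
          θ u v w + ρ u v z - (-1 : 𝕜) ^ (j.val * k.val) • ρ u (αi (β w)) (αM (βMi y)) +
            (-1 : 𝕜) ^ (i.val * (j.val + k.val)) • ρ v (αi (β w)) (αM (βMi x))))
    -- the T_{θ+θ_f}-extension bracket
    (Br₂ : V × M → V × M → V × M → V × M)
    (h₂add₁ : ∀ p p' q r, Br₂ (p + p') q r = Br₂ p q r + Br₂ p' q r)
    (h₂add₂ : ∀ p q q' r, Br₂ p (q + q') r = Br₂ p q r + Br₂ p q' r)
    (h₂add₃ : ∀ p q r r', Br₂ p q (r + r') = Br₂ p q r + Br₂ p q r')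
    (hBr₂ : ∀ (i j k : ZMod 2) (u v w : V) (x y z : M),
      u ∈ G i → x ∈ GM i → v ∈ G j → y ∈ GM j → w ∈ G k → z ∈ GM k →
      Br₂ (u, x) (v, y) (w, z) =
        (br u v w,
          (θ u v w + Θf u v w) + ρ u v z -
            (-1 : 𝕜) ^ (j.val * k.val) • ρ u (αi (β w)) (αM (βMi y)) +
            (-1 : 𝕜) ^ (i.val * (j.val + k.val)) • ρ v (αi (β w)) (αM (βMi x)))) :
    Function.Bijective (sigmaMap 𝕜 f) ∧
    (∀ p q r, sigmaMap 𝕜 f (Br₁ p q r) = Br₂ (sigmaMap 𝕜 f p) (sigmaMap 𝕜 f q) (sigmaMap 𝕜 f r)) ∧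
    (∀ p, sigmaMap 𝕜 f ((α.prodMap αM) p) = (α.prodMap αM) (sigmaMap 𝕜 f p)) ∧
    (∀ p, sigmaMap 𝕜 f ((β.prodMap βM) p) = (β.prodMap βM) (sigmaMap 𝕜 f p)) := by
  refine ⟨sigmaMap_bijective f, ?_, sigmaMap_prodMap_comm hfα, sigmaMap_prodMap_comm hfβ⟩
  have htwist := αM_βMi_apply_eq hfα hfβ hβi₁ hβMi₂
  exact eq_of_eq_on_homogeneous₃ (N := fun i => (G i).prod (GM i))
    (prod_sup_prod_eq_top halg.sup_top hrep.supM)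
    (fun _ _ _ _ => by rw [h₁add₁, map_add]) (fun _ _ _ _ => by rw [h₁add₂, map_add])
    (fun _ _ _ _ => by rw [h₁add₃, map_add]) (fun _ _ _ _ => by rw [map_add, h₂add₁])
    (fun _ _ _ _ => by rw [map_add, h₂add₂]) (fun _ _ _ _ => by rw [map_add, h₂add₃])
    (fun _ _ _ _ ha _ hb _ hc => sigmaMap_bracket_of_mem hfe htwist hΘf hBr₁ hBr₂ ha hb hc)

/-- Given a 3-cocycle `θ`, an even equivariant linear map `f : g → M` with associated
coboundary-type 3-cocycle `θ_f` (here `Θf`), and the `T_θ`- and `T_{θ+θ_f}`-extension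
brackets `Br₁` and `Br₂` on `g ⊕ M`, the map `σ(v + x) = v + f(v) + x` is an isomorphism
of 3-BiHom-Lie superalgebras `T_θ(g) → T_{θ+θ_f}(g)`. -/
theorem statement12 {𝕜 V M : Type*} [Field 𝕜] [AddCommGroup V] [Module 𝕜 V]
    [AddCommGroup M] [Module 𝕜 M]
    (G : ZMod 2 → Submodule 𝕜 V) (br : V → V → V → V) (α β : V →ₗ[𝕜] V)
    (GM : ZMod 2 → Submodule 𝕜 M) (ρ : V → V → M →ₗ[𝕜] M) (αM βM : M →ₗ[𝕜] M)
    (θ : V → V → V → M)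
    (halg : Is3BiHomLieSuper 𝕜 G br α β)
    (hrep : IsRep3 𝕜 G br α β GM ρ αM βM)
    (hcoc : Is3Cocycle 𝕜 G br α β GM ρ αM βM θ)
    (αi : V →ₗ[𝕜] V) (hαi₁ : ∀ x, α (αi x) = x) (hαi₂ : ∀ x, αi (α x) = x)
    (βi : V →ₗ[𝕜] V) (hβi₁ : ∀ x, β (βi x) = x) (hβi₂ : ∀ x, βi (β x) = x)
    (βMi : M →ₗ[𝕜] M) (hβMi₁ : ∀ m, βM (βMi m) = m) (hβMi₂ : ∀ m, βMi (βM m) = m)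
    (f : V →ₗ[𝕜] M)
    (hfe : ∀ i, ∀ x ∈ G i, f x ∈ GM i)
    (hfα : ∀ x, f (α x) = αM (f x)) (hfβ : ∀ x, f (β x) = βM (f x))
    -- the coboundary-type 3-cocycle θ_f
    (Θf : V → V → V → M)
    (hΘadd₁ : ∀ x x' y z, Θf (x + x') y z = Θf x y z + Θf x' y z)
    (hΘsmul₁ : ∀ (c : 𝕜) x y z, Θf (c • x) y z = c • Θf x y z)
    (hΘadd₂ : ∀ x y y' z, Θf x (y + y') z = Θf x y z + Θf x y' z)
    (hΘsmul₂ : ∀ (c : 𝕜) x y z, Θf x (c • y) z = c • Θf x y z)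
    (hΘadd₃ : ∀ x y z z', Θf x y (z + z') = Θf x y z + Θf x y z')
    (hΘsmul₃ : ∀ (c : 𝕜) x y z, Θf x y (c • z) = c • Θf x y z)
    (hΘf : ∀ (i j k : ZMod 2), ∀ x ∈ G i, ∀ y ∈ G j, ∀ z ∈ G k,
      Θf x y z =
        f (br x y z) - ρ x y (f z) +
          (-1 : 𝕜) ^ (j.val * k.val) • ρ x (αi (β z)) (f (α (βi y))) -
          (-1 : 𝕜) ^ ((j.val + k.val) * i.val) • ρ y (αi (β z)) (f (α (βi x))))
    -- the T_θ-extension bracket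
    (Br₁ : V × M → V × M → V × M → V × M)
    (h₁add₁ : ∀ p p' q r, Br₁ (p + p') q r = Br₁ p q r + Br₁ p' q r)
    (h₁smul₁ : ∀ (c : 𝕜) p q r, Br₁ (c • p) q r = c • Br₁ p q r)
    (h₁add₂ : ∀ p q q' r, Br₁ p (q + q') r = Br₁ p q r + Br₁ p q' r)
    (h₁smul₂ : ∀ (c : 𝕜) p q r, Br₁ p (c • q) r = c • Br₁ p q r)
    (h₁add₃ : ∀ p q r r', Br₁ p q (r + r') = Br₁ p q r + Br₁ p q r')
    (h₁smul₃ : ∀ (c : 𝕜) p q r, Br₁ p q (c • r) = c • Br₁ p q r)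
    (hBr₁ : ∀ (i j k : ZMod 2) (u v w : V) (x y z : M),
      u ∈ G i → x ∈ GM i → v ∈ G j → y ∈ GM j → w ∈ G k → z ∈ GM k →
      Br₁ (u, x) (v, y) (w, z) =
        (br u v w,
          θ u v w + ρ u v z - (-1 : 𝕜) ^ (j.val * k.val) • ρ u (αi (β w)) (αM (βMi y)) +
            (-1 : 𝕜) ^ (i.val * (j.val + k.val)) • ρ v (αi (β w)) (αM (βMi x))))
    -- the T_{θ+θ_f}-extension bracket
    (Br₂ : V × M → V × M → V × M → V × M)
    (h₂add₁ : ∀ p p' q r, Br₂ (p + p') q r = Br₂ p q r + Br₂ p' q r)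
    (h₂smul₁ : ∀ (c : 𝕜) p q r, Br₂ (c • p) q r = c • Br₂ p q r)
    (h₂add₂ : ∀ p q q' r, Br₂ p (q + q') r = Br₂ p q r + Br₂ p q' r)
    (h₂smul₂ : ∀ (c : 𝕜) p q r, Br₂ p (c • q) r = c • Br₂ p q r)
    (h₂add₃ : ∀ p q r r', Br₂ p q (r + r') = Br₂ p q r + Br₂ p q r')
    (h₂smul₃ : ∀ (c : 𝕜) p q r, Br₂ p q (c • r) = c • Br₂ p q r)
    (hBr₂ : ∀ (i j k : ZMod 2) (u v w : V) (x y z : M),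
      u ∈ G i → x ∈ GM i → v ∈ G j → y ∈ GM j → w ∈ G k → z ∈ GM k →
      Br₂ (u, x) (v, y) (w, z) =
        (br u v w,
          (θ u v w + Θf u v w) + ρ u v z -
            (-1 : 𝕜) ^ (j.val * k.val) • ρ u (αi (β w)) (αM (βMi y)) +
            (-1 : 𝕜) ^ (i.val * (j.val + k.val)) • ρ v (αi (β w)) (αM (βMi x)))) :
    Function.Bijective (sigmaMap 𝕜 f) ∧
    (∀ p q r, sigmaMap 𝕜 f (Br₁ p q r) = Br₂ (sigmaMap 𝕜 f p) (sigmaMap 𝕜 f q) (sigmaMap 𝕜 f r)) ∧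
    (∀ p, sigmaMap 𝕜 f ((α.prodMap αM) p) = (α.prodMap αM) (sigmaMap 𝕜 f p)) ∧
    (∀ p, sigmaMap 𝕜 f ((β.prodMap βM) p) = (β.prodMap βM) (sigmaMap 𝕜 f p)) :=
  statement12_general G br α β GM ρ αM βM θ halg hrep αi βi hβi₁ βMi hβMi₂ f hfe hfα hfβ Θf hΘf Br₁
    h₁add₁ h₁add₂ h₁add₃ hBr₁ Br₂ h₂add₁ h₂add₂ h₂add₃ hBr₂
end

section
/- Let g be a 3-BiHom-Lie superalgebra that is solvable. Then the T_θ-extension g ⊕ g* (with bracket [·,·,·]_θ built from the coadjoint representation and a 3-cocycle θ) is solvable. -/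
/-- The span of all brackets `br x y z` with `x ∈ P`, `y ∈ Q`, `z ∈ R`. -/
def tripleSpan (𝕜 : Type*) [Field 𝕜] {V : Type*} [AddCommGroup V] [Module 𝕜 V]
    (br : V → V → V → V) (P Q R : Submodule 𝕜 V) : Submodule 𝕜 V :=
  Submodule.span 𝕜 {w : V | ∃ x ∈ P, ∃ y ∈ Q, ∃ z ∈ R, w = br x y z}

/-- Derived series: `g^{(0)} = g`, `g^{(n+1)} = [g^{(n)}, g^{(n)}, g]`. -/
def derivedSeries3 (𝕜 : Type*) [Field 𝕜] {V : Type*} [AddCommGroup V] [Module 𝕜 V]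
    (br : V → V → V → V) : ℕ → Submodule 𝕜 V
  | 0 => ⊤
  | n + 1 => tripleSpan 𝕜 br (derivedSeries3 𝕜 br n) (derivedSeries3 𝕜 br n) ⊤

/-- Central descending series: `g^0 = g`, `g^{n+1} = [g^n, g, g]`. -/
def lowerSeries3 (𝕜 : Type*) [Field 𝕜] {V : Type*} [AddCommGroup V] [Module 𝕜 V]
    (br : V → V → V → V) : ℕ → Submodule 𝕜 V
  | 0 => ⊤
  | n + 1 => tripleSpan 𝕜 br (lowerSeries3 𝕜 br n) ⊤ ⊤


/-!
Every element of `g ⊕ g*` is a sum of homogeneous elements, on which the `g`-component of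
`[·,·,·]_θ` is the bracket of `g`; by additivity, projecting to `g` is therefore a morphism of
ternary brackets, which carries `(g ⊕ g*)^{(k)}` into `g^{(k)}`. If `g^{(s)} = 0`, the
generators of `(g ⊕ g*)^{(s+1)}` are brackets whose first two arguments lie in `g*`, and
each term of such a bracket has a vanishing `g`-argument.
-/

theorem map_zero_of_map_add {A M : Type*} [AddZeroClass A] [AddGroup M] {f : A → M}
    (hf : ∀ a b, f (a + b) = f a + f b) : f 0 = 0 := by
  simpa using (AddMonoidHom.mk' f hf).map_zero

section Bracket

variable {𝕜 V W : Type*} [Field 𝕜] [AddCommGroup V] [Module 𝕜 V] [AddCommGroup W] [Module 𝕜 W]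

theorem derivedSeries3_le_comap (Br : W → W → W → W) (br : V → V → V → V) (f : W →ₗ[𝕜] V)
    (hf : ∀ p q r, f (Br p q r) = br (f p) (f q) (f r)) (n : ℕ) :
    derivedSeries3 𝕜 Br n ≤ (derivedSeries3 𝕜 br n).comap f := by
  induction n with
  | zero => exact le_top
  | succ n ih =>
    refine Submodule.span_le.2 ?_
    rintro _ ⟨p, hp, q, hq, r, -, rfl⟩
    rw [SetLike.mem_coe, Submodule.mem_comap, hf]
    exact Submodule.subset_span ⟨f p, ih hp, f q, ih hq, f r, Submodule.mem_top, rfl⟩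

theorem derivedSeries3_succ_eq_bot_of_ker (Br : W → W → W → W) (br : V → V → V → V)
    (f : W →ₗ[𝕜] V) (hf : ∀ p q r, f (Br p q r) = br (f p) (f q) (f r))
    (hker : ∀ p q r, f p = 0 → f q = 0 → Br p q r = 0) {s : ℕ}
    (hs : derivedSeries3 𝕜 br s = ⊥) : derivedSeries3 𝕜 Br (s + 1) = ⊥ := by
  have hker_of_mem : ∀ p ∈ derivedSeries3 𝕜 Br s, f p = 0 := fun p hp => by
    simpa [hs] using derivedSeries3_le_comap Br br f hf s hp
  refine le_bot_iff.1 (Submodule.span_le.2 ?_)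
  rintro _ ⟨p, hp, q, hq, r, -, rfl⟩
  exact hker p q r (hker_of_mem p hp) (hker_of_mem q hq)

end Bracket

section Additive

variable {R ι W M : Type*} [Semiring R] [AddCommGroup W] [Module R W] [AddCommGroup M]
  {A : ι → Submodule R W}

theorem eq_of_iSup_eq_top_of_map_add (hA : ⨆ i, A i = ⊤) {f g : W → M}
    (hf : ∀ a b, f (a + b) = f a + f b) (hg : ∀ a b, g (a + b) = g a + g b)
    (h : ∀ i, ∀ a ∈ A i, f a = g a) (a : W) : f a = g a := by
  refine Submodule.iSup_induction A (motive := fun a => f a = g a) (hA ▸ Submodule.mem_top) h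
    ?_ ?_
  · rw [map_zero_of_map_add hf, map_zero_of_map_add hg]
  · intro a b ha hb
    rw [hf, hg, ha, hb]

theorem eq_of_iSup_eq_top_of_map_add₃ (hA : ⨆ i, A i = ⊤) {F H : W → W → W → M}
    (hF₁ : ∀ p p' q r, F (p + p') q r = F p q r + F p' q r)
    (hF₂ : ∀ p q q' r, F p (q + q') r = F p q r + F p q' r)
    (hF₃ : ∀ p q r r', F p q (r + r') = F p q r + F p q r')
    (hH₁ : ∀ p p' q r, H (p + p') q r = H p q r + H p' q r)
    (hH₂ : ∀ p q q' r, H p (q + q') r = H p q r + H p q' r)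
    (hH₃ : ∀ p q r r', H p q (r + r') = H p q r + H p q r')
    (h : ∀ i j k, ∀ p ∈ A i, ∀ q ∈ A j, ∀ r ∈ A k, F p q r = H p q r) (p q r : W) :
    F p q r = H p q r := by
  refine eq_of_iSup_eq_top_of_map_add (f := (F · q r)) (g := (H · q r)) hA
    (hF₁ · · q r) (hH₁ · · q r) (fun i p hp => ?_) p
  refine eq_of_iSup_eq_top_of_map_add (f := (F p · r)) (g := (H p · r)) hA
    (hF₂ p · · r) (hH₂ p · · r) (fun j q hq => ?_) q
  exact eq_of_iSup_eq_top_of_map_add hA (hF₃ p q) (hH₃ p q) (h i j · p hp q hq) r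

end Additive

section Grading

variable {𝕜 V : Type*} [Field 𝕜] [AddCommGroup V] [Module 𝕜 V]

/-- The homogeneous elements of degree `i` of `g ⊕ g*`: a functional has degree `i` when it
vanishes on the other degree `i + 1`. -/
def dualGradedPiece (G : ZMod 2 → Submodule 𝕜 V) (i : ZMod 2) :
    Submodule 𝕜 (V × Module.Dual 𝕜 V) :=
  (G i).prod (G (i + 1)).dualAnnihilator

theorem iSup_dualGradedPiece_eq_top {G : ZMod 2 → Submodule 𝕜 V} (hG : IsCompl (G 0) (G 1)) :
    ⨆ i, dualGradedPiece G i = ⊤ := by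
  refine eq_top_iff.2 fun ⟨u, f⟩ _ => ?_
  have hu : u ∈ G 0 ⊔ G 1 := hG.sup_eq_top ▸ Submodule.mem_top
  obtain ⟨u₀, hu₀, u₁, hu₁, rfl⟩ := Submodule.mem_sup.1 hu
  have hf : f ∈ (G 0).dualAnnihilator ⊔ (G 1).dualAnnihilator := by
    rw [← Subspace.dualAnnihilator_inf_eq, hG.inf_eq_bot, Submodule.dualAnnihilator_bot]
    exact Submodule.mem_top
  obtain ⟨f₁, hf₁, f₀, hf₀, rfl⟩ := Submodule.mem_sup.1 hf
  rw [add_comm f₁, ← Prod.mk_add_mk]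
  exact add_mem (Submodule.mem_iSup_of_mem 0 (Submodule.mem_prod.2 ⟨hu₀, hf₀⟩))
    (Submodule.mem_iSup_of_mem 1 (Submodule.mem_prod.2 ⟨hu₁, hf₁⟩))

end Grading

theorem statement14_general {𝕜 V : Type*} [Field 𝕜] [AddCommGroup V] [Module 𝕜 V]
    (G : ZMod 2 → Submodule 𝕜 V) (br : V → V → V → V) (α β : V →ₗ[𝕜] V)
    (halg : Is3BiHomLieSuper 𝕜 G br α β)
    (αi : V →ₗ[𝕜] V)
    (βi : V →ₗ[𝕜] V)
    -- the coadjoint representation on g*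
    (ρ : V → V → Module.Dual 𝕜 V →ₗ[𝕜] Module.Dual 𝕜 V)
    (hρadd₁ : ∀ x x' y, ρ (x + x') y = ρ x y + ρ x' y)
    -- a 3-cocycle with values in g*
    (θ : V → V → V → Module.Dual 𝕜 V)
    (hcoc : Is3Cocycle 𝕜 G br α β (fun d => (G (d + 1)).dualAnnihilator) ρ
      α.dualMap β.dualMap θ)
    -- the T_θ-extension bracket on g ⊕ g*
    (Br : V × Module.Dual 𝕜 V → V × Module.Dual 𝕜 V → V × Module.Dual 𝕜 V →
      V × Module.Dual 𝕜 V)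
    (hadd₁ : ∀ p p' q r, Br (p + p') q r = Br p q r + Br p' q r)
    (hadd₂ : ∀ p q q' r, Br p (q + q') r = Br p q r + Br p q' r)
    (hadd₃ : ∀ p q r r', Br p q (r + r') = Br p q r + Br p q r')
    (hBr : ∀ (i j k : ZMod 2) (u v w : V) (x y z : Module.Dual 𝕜 V),
      u ∈ G i → x ∈ (G (i + 1)).dualAnnihilator →
      v ∈ G j → y ∈ (G (j + 1)).dualAnnihilator →
      w ∈ G k → z ∈ (G (k + 1)).dualAnnihilator →
      Br (u, x) (v, y) (w, z) =
        (br u v w,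
          θ u v w + ρ u v z -
            (-1 : 𝕜) ^ (j.val * k.val) • ρ u (αi (β w)) (α.dualMap (βi.dualMap y)) +
            (-1 : 𝕜) ^ (i.val * (j.val + k.val)) • ρ v (αi (β w)) (α.dualMap (βi.dualMap x))))
    (hsolv : ∃ k, derivedSeries3 𝕜 br k = ⊥) :
    ∃ k, derivedSeries3 𝕜 Br k = ⊥ := by
  have hgrading : ⨆ i, dualGradedPiece G i = ⊤ :=
    iSup_dualGradedPiece_eq_top ⟨disjoint_iff.2 halg.inf_bot, codisjoint_iff.2 halg.sup_top⟩
  have fst_Br : ∀ p q r, (Br p q r).1 = br p.1 q.1 r.1 := by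
    refine eq_of_iSup_eq_top_of_map_add₃ hgrading
      (fun _ _ _ _ => by rw [hadd₁, Prod.fst_add]) (fun _ _ _ _ => by rw [hadd₂, Prod.fst_add])
      (fun _ _ _ _ => by rw [hadd₃, Prod.fst_add]) (fun _ _ _ _ => halg.add₁ _ _ _ _)
      (fun _ _ _ _ => halg.add₂ _ _ _ _) (fun _ _ _ _ => halg.add₃ _ _ _ _) ?_
    rintro i j k ⟨u, x⟩ ⟨hu, hx⟩ ⟨v, y⟩ ⟨hv, hy⟩ ⟨w, z⟩ ⟨hw, hz⟩
    rw [hBr i j k u v w x y z hu hx hv hy hw hz]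
  have br_zero v w : br 0 v w = 0 := map_zero_of_map_add (f := (br · v w)) (halg.add₁ · · v w)
  have θ_zero v w : θ 0 v w = 0 := map_zero_of_map_add (f := (θ · v w)) (hcoc.θadd₁ · · v w)
  have ρ_zero v : ρ 0 v = 0 := map_zero_of_map_add (f := (ρ · v)) (hρadd₁ · · v)
  have Br_zero x y r : Br (0, x) (0, y) r = 0 := by
    refine eq_of_iSup_eq_top_of_map_add₃ (F := fun p q r => Br (0, p.2) (0, q.2) r)
      (H := fun _ _ _ => 0) hgrading
      (fun p p' q r => by simpa using hadd₁ (0, p.2) (0, p'.2) (0, q.2) r)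
      (fun p q q' r => by simpa using hadd₂ (0, p.2) (0, q.2) (0, q'.2) r)
      (fun _ _ _ _ => hadd₃ _ _ _ _) (fun _ _ _ _ => (add_zero 0).symm)
      (fun _ _ _ _ => (add_zero 0).symm) (fun _ _ _ _ => (add_zero 0).symm) ?_ (0, x) (0, y) r
    rintro i j k ⟨_, f₁⟩ ⟨-, hf₁⟩ ⟨_, f₂⟩ ⟨-, hf₂⟩ ⟨w, f₃⟩ ⟨hw, hf₃⟩
    rw [hBr i j k 0 0 w f₁ f₂ f₃ (zero_mem _) hf₁ (zero_mem _) hf₂ hw hf₃, br_zero, θ_zero,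
      ρ_zero, ρ_zero]
    simp
  obtain ⟨s, hs⟩ := hsolv
  refine ⟨s + 1, derivedSeries3_succ_eq_bot_of_ker Br br (LinearMap.fst 𝕜 V _) fst_Br ?_ hs⟩
  rintro ⟨u, x⟩ ⟨v, y⟩ r (rfl : u = 0) (rfl : v = 0)
  exact Br_zero x y r

/-- If the 3-BiHom-Lie superalgebra `g` is solvable, then its `T_θ`-extension `g ⊕ g*`
(with bracket built from the coadjoint representation `ad*` and a 3-cocycle `θ`) is solvable. -/
theorem statement14 {𝕜 V : Type*} [Field 𝕜] [AddCommGroup V] [Module 𝕜 V]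
    (G : ZMod 2 → Submodule 𝕜 V) (br : V → V → V → V) (α β : V →ₗ[𝕜] V)
    (halg : Is3BiHomLieSuper 𝕜 G br α β)
    (αi : V →ₗ[𝕜] V) (hαi₁ : ∀ x, α (αi x) = x) (hαi₂ : ∀ x, αi (α x) = x)
    (βi : V →ₗ[𝕜] V) (hβi₁ : ∀ x, β (βi x) = x) (hβi₂ : ∀ x, βi (β x) = x)
    -- the coadjoint representation on g*
    (ρ : V → V → Module.Dual 𝕜 V →ₗ[𝕜] Module.Dual 𝕜 V)
    (hρadd₁ : ∀ x x' y, ρ (x + x') y = ρ x y + ρ x' y)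
    (hρsmul₁ : ∀ (c : 𝕜) x y, ρ (c • x) y = c • ρ x y)
    (hρadd₂ : ∀ x y y', ρ x (y + y') = ρ x y + ρ x y')
    (hρsmul₂ : ∀ (c : 𝕜) x y, ρ x (c • y) = c • ρ x y)
    (hρ : ∀ (i j d : ZMod 2), ∀ x ∈ G i, ∀ y ∈ G j,
      ∀ h ∈ (G (d + 1)).dualAnnihilator, ∀ z : V,
      ρ x y h z = -((-1 : 𝕜) ^ (d.val * (i.val + j.val))) * h (br x y z))
    -- a 3-cocycle with values in g*
    (θ : V → V → V → Module.Dual 𝕜 V)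
    (hcoc : Is3Cocycle 𝕜 G br α β (fun d => (G (d + 1)).dualAnnihilator) ρ
      α.dualMap β.dualMap θ)
    -- the T_θ-extension bracket on g ⊕ g*
    (Br : V × Module.Dual 𝕜 V → V × Module.Dual 𝕜 V → V × Module.Dual 𝕜 V →
      V × Module.Dual 𝕜 V)
    (hadd₁ : ∀ p p' q r, Br (p + p') q r = Br p q r + Br p' q r)
    (hsmul₁ : ∀ (c : 𝕜) p q r, Br (c • p) q r = c • Br p q r)
    (hadd₂ : ∀ p q q' r, Br p (q + q') r = Br p q r + Br p q' r)
    (hsmul₂ : ∀ (c : 𝕜) p q r, Br p (c • q) r = c • Br p q r)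
    (hadd₃ : ∀ p q r r', Br p q (r + r') = Br p q r + Br p q r')
    (hsmul₃ : ∀ (c : 𝕜) p q r, Br p q (c • r) = c • Br p q r)
    (hBr : ∀ (i j k : ZMod 2) (u v w : V) (x y z : Module.Dual 𝕜 V),
      u ∈ G i → x ∈ (G (i + 1)).dualAnnihilator →
      v ∈ G j → y ∈ (G (j + 1)).dualAnnihilator →
      w ∈ G k → z ∈ (G (k + 1)).dualAnnihilator →
      Br (u, x) (v, y) (w, z) =
        (br u v w,
          θ u v w + ρ u v z -
            (-1 : 𝕜) ^ (j.val * k.val) • ρ u (αi (β w)) (α.dualMap (βi.dualMap y)) +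
            (-1 : 𝕜) ^ (i.val * (j.val + k.val)) • ρ v (αi (β w)) (α.dualMap (βi.dualMap x))))
    (hsolv : ∃ k, derivedSeries3 𝕜 br k = ⊥) :
    ∃ k, derivedSeries3 𝕜 Br k = ⊥ :=
  statement14_general G br α β halg αi βi ρ hρadd₁ θ hcoc Br hadd₁ hadd₂ hadd₃ hBr hsolv
end
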